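/- arXiv:1202.0095 — 7 statements merged into one kernel-verified Lean document; each statement's English description precedes it below -/
import Mathlib

section
/- Let K be a field of characteristic zero and let S and C be types. In the free Lie algebra L = FreeLieAlgebra K (S ⊕ C), let I be the Lie ideal generated by the image of C under the canonical embedding ι, and let A be the Lie subalgebra generated by the image of S. Then L decomposes as the internal direct sum of I and A as K-modules (i.e., the underlying submodules of I and A span L and intersect trivially), and the canonical Lie algebra morphism FreeLieAlgebra K S → L induced by the left inclusion S → S ⊕ C is injective with image exactly A. -/
/-!
The Lie morphism `π : FreeLieAlgebra K (S ⊕ C) → FreeLieAlgebra K S` sending the generators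
from `S` to themselves and those from `C` to `0` is a left inverse of `φ` and vanishes on `I`.
Hence `φ` is injective and `I ∩ A = I ∩ range φ = 0`. Since `I` is an ideal, `I + A` is closed
under the bracket; it contains every generator, so it is everything.
-/

open FreeLieAlgebra

section

variable {R L L' : Type*} [CommRing R] [LieRing L] [LieAlgebra R L] [LieRing L'] [LieAlgebra R L']

namespace FreeLieAlgebra

variable {X : Type*}

theorem range_lift (f : X → L) : (lift R f).range = LieSubalgebra.lieSpan R L (Set.range f) := by
  set B := LieSubalgebra.lieSpan R L (Set.range f)
  refine le_antisymm ?_ (LieSubalgebra.lieSpan_le.mpr ?_)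
  · let g : FreeLieAlgebra R X →ₗ⁅R⁆ B :=
      lift R fun x => ⟨f x, LieSubalgebra.subset_lieSpan (Set.mem_range_self x)⟩
    have hg : B.incl.comp g = lift R f := hom_ext fun x => by simp [g]
    rintro _ ⟨y, rfl⟩
    rw [← hg]
    exact (g y).2
  · rintro _ ⟨x, rfl⟩
    exact ⟨of R x, lift_of_apply f x⟩

variable (R X) in
theorem lieSpan_range_of : LieSubalgebra.lieSpan R (FreeLieAlgebra R X) (Set.range (of R)) = ⊤ := by
  rw [← range_lift, ← (lift_unique (of R) LieHom.id).mp rfl]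
  exact (LieHom.range_eq_top _).mpr Function.surjective_id

end FreeLieAlgebra

namespace LieIdeal

def supLieSubalgebra (I : LieIdeal R L) (A : LieSubalgebra R L) : LieSubalgebra R L where
  toSubmodule := (I : Submodule R L) ⊔ A.toSubmodule
  lie_mem' {x y} hx hy := by
    obtain ⟨i, hi, a, ha, rfl⟩ := Submodule.mem_sup.mp hx
    obtain ⟨j, hj, b, hb, rfl⟩ := Submodule.mem_sup.mp hy
    refine Submodule.mem_sup.mpr ⟨⁅a, j⁆ + ⁅i, b + j⁆, add_mem (I.lie_mem hj) ?_, ⁅a, b⁆,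
      A.lie_mem ha hb, by simp only [add_lie, lie_add]; abel⟩
    rw [← lie_skew]
    exact neg_mem (I.lie_mem hi)

theorem toSubmodule_sup_eq_top {I : LieIdeal R L} {A : LieSubalgebra R L} {s : Set L}
    (hs : LieSubalgebra.lieSpan R L s = ⊤) (hsub : s ⊆ I ∪ A) :
    (I : Submodule R L) ⊔ A.toSubmodule = ⊤ := by
  have : I.supLieSubalgebra A = ⊤ := by
    rw [eq_top_iff, ← hs, LieSubalgebra.lieSpan_le]
    intro x hx
    rcases hsub hx with hI | hA
    exacts [Submodule.mem_sup_left hI, Submodule.mem_sup_right hA]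
  exact congrArg LieSubalgebra.toSubmodule this

end LieIdeal

theorem LieHom.disjoint_range_ker_of_leftInverse {f : L →ₗ⁅R⁆ L'} {g : L' →ₗ⁅R⁆ L}
    (h : Function.LeftInverse g f) :
    Disjoint (f.range : Submodule R L') (g.ker : Submodule R L') := by
  rw [Submodule.disjoint_def]
  rintro _ ⟨y, rfl⟩ hy
  have hgy : g (f y) = 0 := hy
  rw [← h y, hgy, map_zero]

end

theorem lazard_elimination_part1_general (K : Type*) [Field K] (S C : Type*)
    (I : LieIdeal K (FreeLieAlgebra K (S ⊕ C)))
    (hI : I = LieSubmodule.lieSpan K (FreeLieAlgebra K (S ⊕ C))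
      (Set.range (fun c : C => FreeLieAlgebra.of K (Sum.inr c))))
    (A : LieSubalgebra K (FreeLieAlgebra K (S ⊕ C)))
    (hA : A = LieSubalgebra.lieSpan K (FreeLieAlgebra K (S ⊕ C))
      (Set.range (fun s : S => FreeLieAlgebra.of K (Sum.inl s))))
    (φ : FreeLieAlgebra K S →ₗ⁅K⁆ FreeLieAlgebra K (S ⊕ C))
    (hφ : φ = FreeLieAlgebra.lift K (fun s : S => FreeLieAlgebra.of K (Sum.inl s))) :
    (I : Submodule K (FreeLieAlgebra K (S ⊕ C))) ⊔
        (A : Submodule K (FreeLieAlgebra K (S ⊕ C))) = ⊤ ∧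
      (I : Submodule K (FreeLieAlgebra K (S ⊕ C))) ⊓
        (A : Submodule K (FreeLieAlgebra K (S ⊕ C))) = ⊥ ∧
      Function.Injective φ ∧ φ.range = A := by
  let π : FreeLieAlgebra K (S ⊕ C) →ₗ⁅K⁆ FreeLieAlgebra K S := lift K (Sum.elim (of K) 0)
  have hπφ : Function.LeftInverse π φ := by
    have : π.comp φ = LieHom.id := hom_ext fun s => by simp [π, hφ]
    exact fun x => congr($this x)
  have hrange : φ.range = A := by rw [hφ, hA, range_lift]
  have hIπ : I ≤ π.ker := by
    rw [hI, LieSubmodule.lieSpan_le]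
    rintro _ ⟨c, rfl⟩
    simp [π]
  refine ⟨?_, ?_, hπφ.injective, hrange⟩
  · refine LieIdeal.toSubmodule_sup_eq_top (lieSpan_range_of K (S ⊕ C)) ?_
    rintro _ ⟨s | c, rfl⟩
    · exact Or.inr (hA ▸ LieSubalgebra.subset_lieSpan (Set.mem_range_self s))
    · exact Or.inl (hI ▸ LieSubmodule.subset_lieSpan (Set.mem_range_self c))
  · rw [← hrange, ← disjoint_iff]
    exact ((LieHom.disjoint_range_ker_of_leftInverse hπφ).mono_right
      ((LieSubmodule.toSubmodule_le_toSubmodule _ _).mpr hIπ)).symm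

/-- **Lazard Elimination, part 1.**
In the free Lie algebra `L = FreeLieAlgebra K (S ⊕ C)`, let `I` be the Lie ideal
generated by the image of `C` and `A` the Lie subalgebra generated by the image of `S`.
Then `L` is the internal direct sum of `I` and `A` as `K`-modules, and the canonical
morphism `FreeLieAlgebra K S → L` is injective with image `A`. -/
theorem lazard_elimination_part1 (K : Type*) [Field K] [CharZero K] (S C : Type*)
    (I : LieIdeal K (FreeLieAlgebra K (S ⊕ C)))
    (hI : I = LieSubmodule.lieSpan K (FreeLieAlgebra K (S ⊕ C))
      (Set.range (fun c : C => FreeLieAlgebra.of K (Sum.inr c))))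
    (A : LieSubalgebra K (FreeLieAlgebra K (S ⊕ C)))
    (hA : A = LieSubalgebra.lieSpan K (FreeLieAlgebra K (S ⊕ C))
      (Set.range (fun s : S => FreeLieAlgebra.of K (Sum.inl s))))
    (φ : FreeLieAlgebra K S →ₗ⁅K⁆ FreeLieAlgebra K (S ⊕ C))
    (hφ : φ = FreeLieAlgebra.lift K (fun s : S => FreeLieAlgebra.of K (Sum.inl s))) :
    (I : Submodule K (FreeLieAlgebra K (S ⊕ C))) ⊔
        (A : Submodule K (FreeLieAlgebra K (S ⊕ C))) = ⊤ ∧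
      (I : Submodule K (FreeLieAlgebra K (S ⊕ C))) ⊓
        (A : Submodule K (FreeLieAlgebra K (S ⊕ C))) = ⊥ ∧
      Function.Injective φ ∧ φ.range = A :=
  lazard_elimination_part1_general K S C I hI A hA φ hφ
end

section
/- Let K be a field of characteristic zero, let n ≥ 2, and let L = FreeLieAlgebra K (Fin n) with canonical embedding ι. Define the multilinear Lie monomials supported on a nonempty finite set s ⊆ Fin n inductively: ι i is a multilinear monomial supported on {i}; and if y, z are multilinear monomials supported on disjoint nonempty sets s₁, s₂ then ⁅y, z⁆ is a multilinear monomial supported on s₁ ∪ s₂. Then every multilinear Lie monomial supported on all of Fin n lies in the K-linear span of the right-normed brackets b_σ = ⁅ι(σ 0), ⁅ι(σ 1), ⋯, ⁅ι(σ (n-2)), ι (n-1)⁆⋯⁆⁆, where σ ranges over permutations of Fin (n-1). -/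
/-- Multilinear Lie monomials in `FreeLieAlgebra K (Fin n)`, supported on a (nonempty)
finite subset of `Fin n`: a generator `ι i` is supported on `{i}`, and the bracket of
monomials supported on disjoint nonempty sets `s₁`, `s₂` is supported on `s₁ ∪ s₂`. -/
inductive IsMultilinearMonomial (K : Type*) [Field K] (n : ℕ) :
    FreeLieAlgebra K (Fin n) → Finset (Fin n) → Prop
  | of (i : Fin n) : IsMultilinearMonomial K n (FreeLieAlgebra.of K i) {i}
  | bracket {y z : FreeLieAlgebra K (Fin n)} {s₁ s₂ : Finset (Fin n)} :
      IsMultilinearMonomial K n y s₁ → IsMultilinearMonomial K n z s₂ →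
      s₁.Nonempty → s₂.Nonempty → Disjoint s₁ s₂ →
      IsMultilinearMonomial K n ⁅y, z⁆ (s₁ ∪ s₂)

/-!
Fix the generator `j` that is to end every bracket, and let `R j s` be the span of the right-normed
brackets `⁅ι w₁, ⁅ι w₂, ⋯, ⁅ι wₖ, ι j⁆⋯⁆⁆` with `{j, w₁, …, wₖ} = s` without repetition. A monomial
`y` not involving `j` acts by `ad y` from `R j s` to `R j (s ∪ supp y)`: for a generator this
prepends a letter, and for `y = ⁅u, v⁆` it follows from `ad ⁅u, v⁆ = ad u ∘ ad v - ad v ∘ ad u`.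
Hence, by induction on the monomial, one involving `j` lies in `R j (supp)`, splitting off the
factor containing `j` by antisymmetry. For `j` the last generator and full support, the
spanning brackets are exactly the `b σ`.
-/

open Finset

section

variable (K : Type*) [Field K] {n : ℕ}

noncomputable def rightNormed (j : Fin n) (w : List (Fin n)) : FreeLieAlgebra K (Fin n) :=
  w.foldr (fun i x => ⁅FreeLieAlgebra.of K i, x⁆) (FreeLieAlgebra.of K j)

noncomputable def rightNormedSpan (j : Fin n) (s : Finset (Fin n)) :
    Submodule K (FreeLieAlgebra K (Fin n)) :=
  Submodule.span K
    {x | ∃ w : List (Fin n), w.Nodup ∧ j ∉ w ∧ insert j w.toFinset = s ∧ rightNormed K j w = x}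

variable {K}

theorem lie_mem_rightNormedSpan_insert {j i : Fin n} {s : Finset (Fin n)} (hi : i ∉ s)
    {z : FreeLieAlgebra K (Fin n)} (hz : z ∈ rightNormedSpan K j s) :
    ⁅FreeLieAlgebra.of K i, z⁆ ∈ rightNormedSpan K j (insert i s) := by
  suffices rightNormedSpan K j s ≤ (rightNormedSpan K j (insert i s)).comap
      (LieAlgebra.ad K _ (FreeLieAlgebra.of K i)) from this hz
  refine Submodule.span_le.mpr ?_
  rintro _ ⟨w, hnd, hj, rfl, rfl⟩
  have hiw : i ∉ w := fun h => hi (mem_insert_of_mem (List.mem_toFinset.mpr h))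
  have hij : j ≠ i := fun h => hi (h ▸ mem_insert_self j _)
  refine Submodule.subset_span ⟨i :: w, List.nodup_cons.mpr ⟨hiw, hnd⟩, ?_, ?_, rfl⟩
  · exact List.mem_cons.not.mpr (not_or.mpr ⟨hij, hj⟩)
  · rw [List.toFinset_cons, insert_comm]

theorem lie_mem_rightNormedSpan {j : Fin n} {y : FreeLieAlgebra K (Fin n)} {s₁ : Finset (Fin n)}
    (hy : IsMultilinearMonomial K n y s₁) (hj : j ∉ s₁) {s₂ : Finset (Fin n)}
    (hdis : Disjoint s₁ s₂) {z : FreeLieAlgebra K (Fin n)} (hz : z ∈ rightNormedSpan K j s₂) :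
    ⁅y, z⁆ ∈ rightNormedSpan K j (s₁ ∪ s₂) := by
  induction hy generalizing s₂ z with
  | of i =>
    rw [singleton_union]
    exact lie_mem_rightNormedSpan_insert (disjoint_singleton_left.mp hdis) hz
  | @bracket u v su sv _ _ _ _ huv ihu ihv =>
    obtain ⟨hju, hjv⟩ := not_or.mp (mem_union.not.mp hj)
    obtain ⟨hus₂, hvs₂⟩ := disjoint_union_left.mp hdis
    have huvz : ⁅u, ⁅v, z⁆⁆ ∈ rightNormedSpan K j (su ∪ (sv ∪ s₂)) :=
      ihu hju (disjoint_union_right.mpr ⟨huv, hus₂⟩) (ihv hjv hvs₂ hz)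
    have hvuz : ⁅v, ⁅u, z⁆⁆ ∈ rightNormedSpan K j (sv ∪ (su ∪ s₂)) :=
      ihv hjv (disjoint_union_right.mpr ⟨huv.symm, hvs₂⟩) (ihu hju hus₂ hz)
    rw [← union_assoc] at huvz
    rw [← union_assoc, union_comm sv su] at hvuz
    rw [lie_lie]
    exact sub_mem huvz hvuz

theorem IsMultilinearMonomial.mem_rightNormedSpan {j : Fin n} {x : FreeLieAlgebra K (Fin n)}
    {s : Finset (Fin n)} (hx : IsMultilinearMonomial K n x s) (hj : j ∈ s) :
    x ∈ rightNormedSpan K j s := by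
  induction hx with
  | of i =>
    obtain rfl := mem_singleton.mp hj
    exact Submodule.subset_span ⟨[], List.nodup_nil, List.not_mem_nil, rfl, rfl⟩
  | @bracket y z s₁ s₂ hy hz _ _ hdis ihy ihz =>
    rcases mem_union.mp hj with hj₁ | hj₂
    · have hzy := lie_mem_rightNormedSpan hz (disjoint_left.mp hdis hj₁) hdis.symm (ihy hj₁)
      rw [union_comm, ← lie_skew] at hzy
      exact neg_mem_iff.mp hzy
    · exact lie_mem_rightNormedSpan hy (disjoint_right.mp hdis hj₂) hdis (ihz hj₂)

end

theorem List.exists_perm_eq_ofFn_castSucc {k : ℕ} {w : List (Fin (k + 1))} (hnd : w.Nodup)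
    (hlast : Fin.last k ∉ w) (hw : insert (Fin.last k) w.toFinset = univ) :
    ∃ σ : Equiv.Perm (Fin k), w = List.ofFn (Fin.castSucc ∘ σ) := by
  have hlen : w.length = k := by
    have := card_insert_of_notMem (mt List.mem_toFinset.mp hlast)
    rw [hw, card_univ, Fintype.card_fin, List.toFinset_card_of_nodup hnd] at this
    omega
  have hne (i : Fin k) : w.get (i.cast hlen.symm) ≠ Fin.last k :=
    fun h => hlast (h ▸ List.get_mem _ _)
  let f (i : Fin k) : Fin k := (w.get (i.cast hlen.symm)).castPred (hne i)
  have hf : Function.Injective f := fun i i' h => by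
    have := congrArg Fin.castSucc h
    simp only [f, Fin.castSucc_castPred] at this
    exact Fin.cast_injective _ (hnd.get_inj_iff.mp this)
  refine ⟨Equiv.ofBijective f (Finite.injective_iff_bijective.mp hf), ?_⟩
  conv_lhs => rw [← List.ofFn_get w, List.ofFn_congr hlen]
  rfl

theorem multilinearMonomial_mem_span_rightNormed_general (K : Type*) [Field K] (m : ℕ)
    (b : Equiv.Perm (Fin (m + 1)) → FreeLieAlgebra K (Fin (m + 2)))
    (hb : ∀ σ : Equiv.Perm (Fin (m + 1)),
      b σ = (List.finRange (m + 1)).foldr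
        (fun i x => ⁅FreeLieAlgebra.of K (Fin.castSucc (σ i)), x⁆)
        (FreeLieAlgebra.of K (Fin.last (m + 1))))
    (x : FreeLieAlgebra K (Fin (m + 2)))
    (hx : IsMultilinearMonomial K (m + 2) x Finset.univ) :
    x ∈ Submodule.span K (Set.range b) := by
  refine Submodule.span_le.mpr ?_ (hx.mem_rightNormedSpan (mem_univ (Fin.last (m + 1))))
  rintro _ ⟨w, hnd, hlast, hw, rfl⟩
  obtain ⟨σ, rfl⟩ := List.exists_perm_eq_ofFn_castSucc hnd hlast hw
  refine Submodule.subset_span ⟨σ, ?_⟩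
  rw [hb, rightNormed, List.ofFn_eq_map, List.foldr_map]
  rfl

/-- Every multilinear Lie monomial supported on all of `Fin n` (with `n = m + 2 ≥ 2`)
lies in the `K`-linear span of the right-normed brackets
`b_σ = ⁅ι(σ 0), ⁅ι(σ 1), ⋯, ⁅ι(σ (n-2)), ι (n-1)⁆⋯⁆⁆`, `σ` a permutation of `Fin (n-1)`. -/
theorem multilinearMonomial_mem_span_rightNormed (K : Type*) [Field K] [CharZero K] (m : ℕ)
    (b : Equiv.Perm (Fin (m + 1)) → FreeLieAlgebra K (Fin (m + 2)))
    (hb : ∀ σ : Equiv.Perm (Fin (m + 1)),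
      b σ = (List.finRange (m + 1)).foldr
        (fun i x => ⁅FreeLieAlgebra.of K (Fin.castSucc (σ i)), x⁆)
        (FreeLieAlgebra.of K (Fin.last (m + 1))))
    (x : FreeLieAlgebra K (Fin (m + 2)))
    (hx : IsMultilinearMonomial K (m + 2) x Finset.univ) :
    x ∈ Submodule.span K (Set.range b) :=
  multilinearMonomial_mem_span_rightNormed_general K m b hb x hx
end

section
/- Let K be a field of characteristic zero and let n ≥ 2. In L = FreeLieAlgebra K (Fin n), the K-submodule spanned by all multilinear Lie monomials supported on all of Fin n (defined inductively: ι i is a multilinear monomial supported on {i}, and ⁅y,z⁆ is a multilinear monomial supported on s₁ ∪ s₂ whenever y, z are multilinear monomials supported on disjoint nonempty sets s₁, s₂) has finite dimension equal to (n-1)!. -/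
/-!
Fix a letter `x ∈ s`. Every multilinear monomial on `s` lies in the span of the right-normed
brackets `[a₁,[a₂,…,[a_k,x]…]]`, where `a₁ … a_k` runs over the arrangements of `s \ {x}`:
by induction on the monomial, the Jacobi identity pushes a bracket with a monomial through such a
span, and antisymmetry moves `x` into the right factor. These `(n-1)!` brackets are linearly
independent, because in the free associative algebra the only word ending in `x` that occurs in
the expansion of `[a₁,[…,[a_k,x]…]]` is `a₁ ⋯ a_k x`, with coefficient `1`.
-/

namespace FreeAlgebra

variable {R X : Type*} [CommSemiring R]

theorem basisFreeMonoid_repr_apply (p : FreeAlgebra R X) (w : FreeMonoid X) :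
    (basisFreeMonoid R X).repr p w = (equivMonoidAlgebraFreeMonoid p).coeff w := rfl

theorem equivMonoidAlgebraFreeMonoid_ι (a : X) :
    equivMonoidAlgebraFreeMonoid (ι R a) = MonoidAlgebra.single (FreeMonoid.of a) 1 := by
  simp [equivMonoidAlgebraFreeMonoid]

theorem basisFreeMonoid_repr_ι (a : X) :
    (basisFreeMonoid R X).repr (ι R a) = Finsupp.single (FreeMonoid.of a) 1 := by
  ext w
  rw [basisFreeMonoid_repr_apply, equivMonoidAlgebraFreeMonoid_ι, MonoidAlgebra.coeff_single]

theorem basisFreeMonoid_repr_ι_mul_of_mul [DecidableEq X] (a b : X) (p : FreeAlgebra R X)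
    (w : FreeMonoid X) :
    (basisFreeMonoid R X).repr (ι R a * p) (.of b * w) =
      if a = b then (basisFreeMonoid R X).repr p w else 0 := by
  rw [basisFreeMonoid_repr_apply, map_mul equivMonoidAlgebraFreeMonoid,
    equivMonoidAlgebraFreeMonoid_ι]
  split_ifs with hab
  · subst hab
    rw [MonoidAlgebra.coeff_single_mul_eq_mul_coeff w fun _ _ ↦ mul_left_cancel_iff, one_mul]
    rfl
  · exact MonoidAlgebra.coeff_single_mul_of_forall_mul_ne _ _ fun d h ↦
      hab (List.cons.inj (congrArg FreeMonoid.toList h)).1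

theorem basisFreeMonoid_repr_mul_ι_mul_of [DecidableEq X] (a b : X) (p : FreeAlgebra R X)
    (w : FreeMonoid X) :
    (basisFreeMonoid R X).repr (p * ι R a) (w * .of b) =
      if a = b then (basisFreeMonoid R X).repr p w else 0 := by
  rw [basisFreeMonoid_repr_apply, map_mul equivMonoidAlgebraFreeMonoid,
    equivMonoidAlgebraFreeMonoid_ι]
  split_ifs with hab
  · subst hab
    rw [MonoidAlgebra.coeff_mul_single_eq_coeff_mul w fun _ _ ↦ mul_right_cancel_iff, mul_one]
    rfl
  · exact MonoidAlgebra.coeff_mul_single_of_forall_mul_ne _ _ fun d h ↦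
      hab (List.singleton_inj.1 (List.append_inj' (congrArg FreeMonoid.toList h) rfl).2)

end FreeAlgebra

namespace FreeLieAlgebra

variable (R : Type*) {X : Type*} [CommRing R]

noncomputable def rightNormed (l : List X) (x : X) : FreeLieAlgebra R X :=
  l.foldr (fun a y ↦ ⁅of R a, y⁆) (of R x)

@[simp] theorem rightNormed_nil (x : X) : rightNormed R [] x = of R x := rfl

@[simp] theorem rightNormed_cons (a : X) (l : List X) (x : X) :
    rightNormed R (a :: l) x = ⁅of R a, rightNormed R l x⁆ := rfl

section

attribute [local instance] LieRing.ofAssociativeRing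

open FreeAlgebra in
theorem basisFreeMonoid_repr_lift_rightNormed [DecidableEq X] {x : X} :
    ∀ {l : List X}, x ∉ l → ∀ l' : List X,
      (basisFreeMonoid R X).repr (lift R (ι R) (rightNormed R l x)) (.ofList l' * .of x) =
        if l' = l then 1 else 0
  | [], _, l' => by
    classical
    rw [rightNormed_nil, lift_of_apply, basisFreeMonoid_repr_ι, Finsupp.single_apply]
    have : FreeMonoid.of x = .ofList l' * .of x ↔ l' = [] := by
      rw [← FreeMonoid.ofList_singleton, ← FreeMonoid.ofList_append,
        FreeMonoid.ofList.injective.eq_iff]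
      simp
    simp only [this]
  | a :: l, hx, l' => by
    obtain ⟨hax, hxl⟩ : a ≠ x ∧ x ∉ l := by simpa [eq_comm] using hx
    rw [rightNormed_cons, LieHom.map_lie, lift_of_apply, Ring.lie_def, map_sub, Finsupp.sub_apply,
      basisFreeMonoid_repr_mul_ι_mul_of, if_neg hax, sub_zero]
    cases l' with
    | nil => simpa [hax] using basisFreeMonoid_repr_ι_mul_of_mul (R := R) a x _ 1
    | cons b l' =>
      rw [FreeMonoid.ofList_cons, mul_assoc, basisFreeMonoid_repr_ι_mul_of_mul,
        basisFreeMonoid_repr_lift_rightNormed hxl]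
      simp [eq_comm, ite_and]

theorem linearIndependent_rightNormed (x : X) :
    LinearIndependent R fun l : {l : List X // x ∉ l} ↦ rightNormed R l.1 x := by
  classical
  rw [linearIndependent_iff']
  intro s g hg l hl
  have hcoeff (k : {l : List X // x ∉ l}) : (FreeAlgebra.basisFreeMonoid R X).repr
      (lift R (FreeAlgebra.ι R) (rightNormed R k.1 x)) (.ofList l.1 * .of x) =
        if l = k then 1 else 0 := by
    simp [basisFreeMonoid_repr_lift_rightNormed R k.2, Subtype.ext_iff]
  simpa [Finset.sum_apply', hcoeff, hl] using congrArg
    (fun y ↦ (FreeAlgebra.basisFreeMonoid R X).repr (lift R (FreeAlgebra.ι R) y)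
      (.ofList l.1 * .of x)) hg

end

variable [DecidableEq X]

noncomputable def rightNormedSpan (t : Finset X) (x : X) : Submodule R (FreeLieAlgebra R X) :=
  Submodule.span R (Set.range fun l : t.toList.permutations.toFinset ↦ rightNormed R l.1 x)

variable {R}

theorem rightNormedSpan_le {t : Finset X} {x : X} {S : Submodule R (FreeLieAlgebra R X)} :
    rightNormedSpan R t x ≤ S ↔ ∀ l : List X, l.Perm t.toList → rightNormed R l x ∈ S := by
  simp [rightNormedSpan, Submodule.span_le, Set.range_subset_iff]

theorem lie_of_mem_rightNormedSpan {t : Finset X} {i x : X} (hi : i ∉ t)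
    {v : FreeLieAlgebra R X} (hv : v ∈ rightNormedSpan R t x) :
    ⁅of R i, v⁆ ∈ rightNormedSpan R (insert i t) x := by
  suffices rightNormedSpan R t x ≤
      (rightNormedSpan R (insert i t) x).comap (LieModule.toEnd R _ _ (of R i)) from this hv
  refine rightNormedSpan_le.2 fun l hl ↦ ?_
  rw [Submodule.mem_comap, LieModule.toEnd_apply_apply, ← rightNormed_cons]
  exact rightNormedSpan_le.1 le_rfl _ ((hl.cons i).trans (Finset.toList_insert hi).symm)

theorem finrank_rightNormedSpan [Nontrivial R] {t : Finset X} {x : X} (hx : x ∉ t) :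
    Module.finrank R (rightNormedSpan R t x) = t.card.factorial := by
  have hxl (l : t.toList.permutations.toFinset) : x ∉ l.1 := by
    rw [(List.mem_permutations.1 (List.mem_toFinset.1 l.2)).mem_iff, Finset.mem_toList]
    exact hx
  have hinj : Function.Injective
      fun l : t.toList.permutations.toFinset ↦ (⟨l.1, hxl l⟩ : {l : List X // x ∉ l}) :=
    fun _ _ h ↦ Subtype.ext (Subtype.mk.inj h)
  have hli : LinearIndependent R fun l : t.toList.permutations.toFinset ↦ rightNormed R l.1 x :=
    (linearIndependent_rightNormed R x).comp _ hinj
  rw [rightNormedSpan, finrank_span_eq_card hli, Fintype.card_coe,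
    List.toFinset_card_of_nodup (List.nodup_permutations _ t.nodup_toList),
    List.length_permutations, Finset.length_toList]

end FreeLieAlgebra

section

open FreeLieAlgebra Finset

variable {K : Type*} [Field K] {n : ℕ}

theorem isMultilinearMonomial_rightNormed {x : Fin n} :
    ∀ {l : List (Fin n)}, l.Nodup → x ∉ l →
      IsMultilinearMonomial K n (rightNormed K l x) (insert x l.toFinset)
  | [], _, _ => by simpa using .of x
  | a :: l, hal, hxl => by
    obtain ⟨hal, hl⟩ := List.nodup_cons.1 hal
    obtain ⟨hxa, hxl⟩ : x ≠ a ∧ x ∉ l := by simpa using hxl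
    have := (IsMultilinearMonomial.of a).bracket (isMultilinearMonomial_rightNormed hl hxl)
      (singleton_nonempty a) (insert_nonempty _ _) (by simpa [eq_comm] using ⟨hxa, hal⟩)
    rwa [singleton_union, insert_comm, ← List.toFinset_cons] at this

namespace IsMultilinearMonomial

theorem lie_mem_rightNormedSpan {y : FreeLieAlgebra K (Fin n)} {s : Finset (Fin n)}
    (hy : IsMultilinearMonomial K n y s) {x : Fin n} :
    ∀ {t : Finset (Fin n)}, Disjoint s t →
      ∀ v ∈ rightNormedSpan K t x, ⁅y, v⁆ ∈ rightNormedSpan K (s ∪ t) x := by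
  induction hy with
  | of i =>
    intro t hit v hv
    rw [singleton_union]
    exact lie_of_mem_rightNormedSpan (disjoint_singleton_left.1 hit) hv
  | @bracket y z s₁ s₂ _ _ _ _ hdisj ihy ihz =>
    intro t hst v hv
    rw [disjoint_union_left] at hst
    have h₁ := ihy (disjoint_union_right.2 ⟨hdisj, hst.1⟩) _ (ihz hst.2 v hv)
    have h₂ := ihz (disjoint_union_right.2 ⟨hdisj.symm, hst.2⟩) _ (ihy hst.1 v hv)
    rw [← union_assoc] at h₁
    rw [← union_assoc, union_comm s₂] at h₂
    rw [lie_lie]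
    exact sub_mem h₁ h₂

theorem mem_rightNormedSpan_erase {y : FreeLieAlgebra K (Fin n)} {s : Finset (Fin n)}
    (hy : IsMultilinearMonomial K n y s) {x : Fin n} (hx : x ∈ s) :
    y ∈ rightNormedSpan K (s.erase x) x := by
  induction hy with
  | of i =>
    obtain rfl := mem_singleton.1 hx
    exact rightNormedSpan_le.1 le_rfl [] (by simp)
  | @bracket y z s₁ s₂ hy hz _ _ hdisj ihy ihz =>
    rcases mem_union.1 hx with hx₁ | hx₂
    · have hx₂ : x ∉ s₂ := disjoint_left.1 hdisj hx₁
      have := hz.lie_mem_rightNormedSpan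
        (disjoint_of_subset_right (erase_subset x s₁) hdisj.symm) _ (ihy hx₁)
      rw [← lie_skew, erase_union_distrib, erase_eq_of_notMem hx₂, union_comm]
      exact neg_mem this
    · have hx₁ : x ∉ s₁ := disjoint_right.1 hdisj hx₂
      have := hy.lie_mem_rightNormedSpan
        (disjoint_of_subset_right (erase_subset x s₂) hdisj) _ (ihz hx₂)
      rwa [erase_union_distrib, erase_eq_of_notMem hx₁]

end IsMultilinearMonomial

theorem span_isMultilinearMonomial_eq_rightNormedSpan {s : Finset (Fin n)} {x : Fin n}
    (hx : x ∈ s) :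
    Submodule.span K {y | IsMultilinearMonomial K n y s} = rightNormedSpan K (s.erase x) x := by
  refine le_antisymm (Submodule.span_le.2 fun y hy ↦ hy.mem_rightNormedSpan_erase hx) ?_
  refine rightNormedSpan_le.2 fun l hl ↦ Submodule.subset_span ?_
  have := isMultilinearMonomial_rightNormed (K := K) (x := x) (hl.nodup_iff.2 (nodup_toList _))
    (by simp [hl.mem_iff])
  rwa [List.toFinset_eq_of_perm _ _ hl, toList_toFinset, insert_erase hx] at this

end

theorem dim_multilinear_part_eq_factorial_general (K : Type*) [Field K] (m : ℕ)
    (M : Submodule K (FreeLieAlgebra K (Fin (m + 2))))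
    (hM : M = Submodule.span K
      {x : FreeLieAlgebra K (Fin (m + 2)) | IsMultilinearMonomial K (m + 2) x Finset.univ}) :
    FiniteDimensional K M ∧ Module.finrank K M = Nat.factorial (m + 1) := by
  rw [span_isMultilinearMonomial_eq_rightNormedSpan (Finset.mem_univ (Fin.last (m + 1)))] at hM
  subst hM
  refine ⟨FiniteDimensional.span_of_finite K (Set.finite_range _), ?_⟩
  simp [FreeLieAlgebra.finrank_rightNormedSpan, Finset.card_erase_of_mem]

/-- `dim Lie(n) = (n-1)!` : the `K`-submodule of `FreeLieAlgebra K (Fin n)` (`n = m+2 ≥ 2`)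
spanned by the multilinear Lie monomials supported on all of `Fin n` is finite-dimensional
of dimension `(n-1)!`. -/
theorem dim_multilinear_part_eq_factorial (K : Type*) [Field K] [CharZero K] (m : ℕ)
    (M : Submodule K (FreeLieAlgebra K (Fin (m + 2))))
    (hM : M = Submodule.span K
      {x : FreeLieAlgebra K (Fin (m + 2)) | IsMultilinearMonomial K (m + 2) x Finset.univ}) :
    FiniteDimensional K M ∧ Module.finrank K M = Nat.factorial (m + 1) :=
  dim_multilinear_part_eq_factorial_general K m M hM
end

section
/- Let K be a field of characteristic zero, let n ≥ 1, and let L = FreeLieAlgebra K (Option (Fin n)) with canonical embedding ι; write δ = ι none. For each permutation σ of Fin n, let c_σ be the left-normed bracket ⁅⋯⁅⁅δ, ι(some (σ 0))⁆, ι(some (σ 1))⁆, ⋯, ι(some (σ (n-1)))⁆. Then the family (c_σ), indexed by the n! permutations σ of Fin n, is linearly independent over K. -/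
/-!
Let the free Lie algebra act on the free module on words by letting each letter append itself,
except that the letters other than `δ` kill the empty word `∅`. Since `⁅⁅y, a⁆, ∅⁆ = -a (y ∅)`
whenever `a` kills `∅`, the bracket `⁅⋯⁅δ, a₁⁆, ⋯, aₖ⁆` sends `∅` to `±(δ a₁ ⋯ aₖ)`.
Distinct words are distinct basis vectors, so these brackets are linearly independent.
-/

attribute [local instance] LieRing.ofAssociativeRing

section LieModule

variable {L M : Type*} [LieRing L] [AddCommGroup M] [LieRingModule L M]

theorem lie_foldl_lie_of_forall_lie_eq_zero (x : L) (m : M) (l : List L)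
    (hl : ∀ a ∈ l, ⁅a, m⁆ = 0) :
    ⁅l.foldl (fun y a => ⁅y, a⁆) x, m⁆ =
      (-1 : ℤ) ^ l.length • l.foldl (fun v a => ⁅a, v⁆) ⁅x, m⁆ := by
  induction l using List.reverseRecOn with
  | nil => simp
  | append_singleton l a ih =>
    have ha : ⁅a, m⁆ = 0 := hl a (by simp)
    rw [List.foldl_append, List.foldl_append, List.foldl_cons, List.foldl_nil, List.foldl_cons,
      List.foldl_nil, lie_lie, ha, lie_zero, zero_sub, ih fun b hb => hl b (by simp [hb]),
      lie_zsmul, List.length_append, List.length_singleton, pow_succ, mul_neg_one, neg_smul]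

end LieModule

namespace FreeLieAlgebra

section AppendLetter

variable (K : Type*) [CommRing K] {X : Type*} [DecidableEq X] (δ : X)

noncomputable def appendLetter (a : X) : Module.End K (List X →₀ K) :=
  Finsupp.linearCombination K fun w =>
    if w = [] ∧ a ≠ δ then 0 else Finsupp.single (w ++ [a]) 1

theorem appendLetter_single (w : List X) (a : X) :
    appendLetter K δ a (Finsupp.single w 1) =
      if w = [] ∧ a ≠ δ then 0 else Finsupp.single (w ++ [a]) 1 := by
  simp [appendLetter]

theorem foldl_appendLetter_single {w : List X} (hw : w ≠ []) (l : List X) :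
    l.foldl (fun v a => appendLetter K δ a v) (Finsupp.single w 1) =
      Finsupp.single (w ++ l) 1 := by
  induction l generalizing w with
  | nil => simp
  | cons a l ih =>
    rw [List.foldl_cons, appendLetter_single, if_neg (by simp [hw]), ih (by simp)]
    simp

theorem lift_appendLetter_foldl_lie_of {l : List X} (hl : δ ∉ l) :
    lift K (appendLetter K δ) (l.foldl (fun y a => ⁅y, of K a⁆) (of K δ))
        (Finsupp.single [] 1) =
      (-1 : ℤ) ^ l.length • Finsupp.single (δ :: l) 1 := by
  let _ := LieRingModule.compLieHom (List X →₀ K) (lift K (appendLetter K δ))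
  have hkill : ∀ y ∈ l.map (of K), ⁅y, Finsupp.single ([] : List X) (1 : K)⁆ = 0 := by
    simp only [List.mem_map, forall_exists_index, and_imp, forall_apply_eq_imp_iff₂]
    intro a ha
    change lift K (appendLetter K δ) (of K a) _ = 0
    rw [lift_of_apply, appendLetter_single, if_pos ⟨rfl, fun h => hl (h ▸ ha)⟩]
  have hsign := lie_foldl_lie_of_forall_lie_eq_zero (of K δ) _ _ hkill
  rw [List.foldl_map, List.foldl_map, List.length_map] at hsign
  refine hsign.trans (congrArg _ ?_)
  change l.foldl (fun v a => lift K (appendLetter K δ) (of K a) v)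
    (lift K (appendLetter K δ) (of K δ) _) = _
  simp only [lift_of_apply, appendLetter_single]
  simpa using foldl_appendLetter_single K δ (w := [δ]) (by simp) l

end AppendLetter

theorem linearIndependent_foldl_lie_of_notMem {K : Type*} [CommRing K] {X : Type*} (δ : X) :
    LinearIndependent K fun l : {l : List X // δ ∉ l} =>
      l.1.foldl (fun y a => ⁅y, of K a⁆) (of K δ) := by
  classical
  let ev := LinearMap.applyₗ (Finsupp.single ([] : List X) (1 : K)) ∘ₗ
    (lift K (appendLetter K δ)).toLinearMap
  refine LinearIndependent.of_comp ev ?_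
  have hev : ev ∘ (fun l : {l : List X // δ ∉ l} =>
        l.1.foldl (fun y a => ⁅y, of K a⁆) (of K δ)) =
      (fun l : {l : List X // δ ∉ l} => (-1 : Kˣ) ^ l.1.length) •
        fun l : {l : List X // δ ∉ l} => Finsupp.single (δ :: l.1) (1 : K) := by
    funext l
    simp [ev, lift_appendLetter_foldl_lie_of K δ l.2, Units.smul_def]
  rw [hev]
  exact ((Finsupp.linearIndependent_single_one K (List X)).comp _
    fun l l' h => Subtype.ext (List.cons_injective h)).units_smul _

end FreeLieAlgebra

theorem leftNormed_derived_brackets_linearIndependent_general (K : Type*) [Field K]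
    (n : ℕ)
    (c : Equiv.Perm (Fin n) → FreeLieAlgebra K (Option (Fin n)))
    (hc : ∀ σ : Equiv.Perm (Fin n),
      c σ = (List.finRange n).foldl
        (fun x i => ⁅x, FreeLieAlgebra.of K (some (σ i))⁆)
        (FreeLieAlgebra.of K (none : Option (Fin n)))) :
    LinearIndependent K c := by
  let word (σ : Equiv.Perm (Fin n)) : {l : List (Option (Fin n)) // none ∉ l} :=
    ⟨(List.finRange n).map (some ∘ σ), by simp⟩
  have hword : Function.Injective word := fun σ τ h => Equiv.ext fun i => by
    simpa [word] using congrArg (fun l => l.1[i]?) h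
  have hc_word : c = (fun l : {l : List (Option (Fin n)) // none ∉ l} =>
      l.1.foldl (fun y a => ⁅y, FreeLieAlgebra.of K a⁆) (FreeLieAlgebra.of K none)) ∘ word := by
    funext σ
    simp [hc, word, List.foldl_map]
  rw [hc_word]
  exact (FreeLieAlgebra.linearIndependent_foldl_lie_of_notMem none).comp word hword

/-- In `L = FreeLieAlgebra K (Option (Fin n))` with `n ≥ 1` and `δ = ι none`, the
left-normed brackets `c_σ = ⁅⋯⁅⁅δ, ι(some (σ 0))⁆, ι(some (σ 1))⁆, ⋯, ι(some (σ (n-1)))⁆`,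
indexed by the permutations `σ` of `Fin n`, are linearly independent over `K`. -/
theorem leftNormed_derived_brackets_linearIndependent (K : Type*) [Field K] [CharZero K]
    (n : ℕ) (hn : 1 ≤ n)
    (c : Equiv.Perm (Fin n) → FreeLieAlgebra K (Option (Fin n)))
    (hc : ∀ σ : Equiv.Perm (Fin n),
      c σ = (List.finRange n).foldl
        (fun x i => ⁅x, FreeLieAlgebra.of K (some (σ i))⁆)
        (FreeLieAlgebra.of K (none : Option (Fin n)))) :
    LinearIndependent K c :=
  leftNormed_derived_brackets_linearIndependent_general K n c hc
end

section
/- Let K be a field of characteristic zero and V a K-vector space. Let T̄V = ⊕_{m≥1} V^{⊗m} be the reduced tensor module, and let Δ : T̄V → T̄V ⊗ T̄V be the unique linear map such that Δ(x) = 0 for x ∈ V and, for m ≥ 2, Δ(x₁ ⊗ ⋯ ⊗ x_m) = Σ_{i=1}^{m-1} Σ_σ (x_{σ(1)} ⊗ ⋯ ⊗ x_{σ(i)}) ⊗ (x_{σ(i+1)} ⊗ ⋯ ⊗ x_{σ(m-1)} ⊗ x_m), where σ ranges over the (i, m-1-i)-unshuffle permutations of {1, …, m-1}, i.e., those with σ(1)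 < ⋯ < σ(i) and σ(i+1) < ⋯ < σ(m-1). Then Δ satisfies the Zinbiel (dual Leibniz) co-identity: (id ⊗ Δ) ∘ Δ = (Δ ⊗ id) ∘ Δ + (τ ⊗ id) ∘ (Δ ⊗ id) ∘ Δ, where τ : T̄V ⊗ T̄V → T̄V ⊗ T̄V is the flip of the two tensor factors. -/
open scoped TensorProduct DirectSum

/-- The reduced tensor module `T̄V = ⊕_{m ≥ 1} V^{⊗m}`; the component of index `p`
is `V^{⊗(p+1)}`. -/
abbrev ReducedTensorModule (K : Type*) [Field K] (V : Type*) [AddCommGroup V]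
    [Module K V] : Type _ :=
  ⨁ (p : ℕ), (⨂[K] (_ : Fin (p + 1)), V)

/-- Inclusion of the `m = p + 1` tensor component into `T̄V`. -/
noncomputable def reducedTensorIncl (K : Type*) [Field K] (V : Type*) [AddCommGroup V]
    [Module K V] (p : ℕ) :
    (⨂[K] (_ : Fin (p + 1)), V) →ₗ[K] ReducedTensorModule K V :=
  DirectSum.lof K ℕ (fun p => ⨂[K] (_ : Fin (p + 1)), V) p

/-!
Write `x_S` for the tensor of the letters indexed by a finite set `S` of positions, in increasing
order, with `x_∅ = 0`. An unshuffle is determined by the set `C` of positions it sends to the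
left factor, so `Δ x_S = ∑ x_C ⊗ x_{S \ C}` over the subsets `C` of `S` avoiding `max S`. Both sides of the co-identity then become sums of `x_A ⊗ x_B ⊗ x_R` over
decompositions `S = A ⊔ B ⊔ R` with `max S ∈ R` and `A`, `B` nonempty: such a term occurs once on
the left, and on the right in the first sum if `max (A ∪ B) ∈ B`, in the second if
`max (A ∪ B) ∈ A`.
-/

open Finset

section Combinatorics

variable {α : Type*} [LinearOrder α] {M : Type*} [AddCommMonoid M]

/-- The possible left factors of `Δ` on the word indexed by `S`: its last letter stays right. -/
def powersetBelowMax (S : Finset α) : Finset (Finset α) :=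
  S.powerset.filter fun C => C.max < S.max

@[simp] lemma mem_powersetBelowMax {S C : Finset α} :
    C ∈ powersetBelowMax S ↔ C ⊆ S ∧ C.max < S.max := by
  simp [powersetBelowMax]

lemma max_lt_max_iff {C S : Finset α} : C.max < S.max ↔ ∃ b ∈ S, ∀ a ∈ C, a < b := by
  rw [max_eq_sup_coe (s := S), Finset.lt_sup_iff]
  refine exists_congr fun b => and_congr_right fun _ => ?_
  rw [max_eq_sup_coe, Finset.sup_lt_iff (WithBot.bot_lt_coe b)]
  simp

lemma max_eq_max_sup_max_sdiff {C S : Finset α} (h : C ⊆ S) : S.max = C.max ⊔ (S \ C).max := by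
  rw [← max_union, union_sdiff_of_subset h]

lemma max_lt_max_iff_max_lt_max_sdiff {C S : Finset α} (h : C ⊆ S) :
    C.max < S.max ↔ C.max < (S \ C).max := by
  rw [max_eq_max_sup_max_sdiff h, lt_sup_iff, or_iff_right (lt_irrefl _)]

lemma max_sdiff_eq_of_max_lt_max {C S : Finset α} (h : C ⊆ S) (hC : C.max < S.max) :
    (S \ C).max = S.max := by
  rw [max_lt_max_iff_max_lt_max_sdiff h] at hC
  rw [max_eq_max_sup_max_sdiff h, sup_eq_right.2 hC.le]

lemma max_ne_max_of_disjoint {C D : Finset α} (h : Disjoint C D) (hne : (C ∪ D).Nonempty) :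
    C.max ≠ D.max := by
  intro heq
  rcases C.eq_empty_or_nonempty with rfl | hC
  · rw [max_empty, eq_comm, Finset.max_eq_bot] at heq
    simp [heq] at hne
  · obtain ⟨a, ha⟩ := max_of_nonempty hC
    exact disjoint_left.1 h (mem_of_max ha) (mem_of_max (heq ▸ ha))

lemma sum_powersetBelowMax_map {β : Type*} [LinearOrder β] (e : β ↪o α)
    (S : Finset β) (g : Finset α → M) :
    ∑ D ∈ powersetBelowMax (S.map e.toEmbedding), g D =
      ∑ C ∈ powersetBelowMax S, g (C.map e.toEmbedding) := by
  refine (sum_nbij (fun C : Finset β => C.map e.toEmbedding) ?_ (map_injective _).injOn ?_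
    fun _ _ => rfl).symm
  · intro C hC
    simp_all [max_lt_max_iff]
  · intro D hD
    obtain ⟨hDS, hDmax⟩ := mem_powersetBelowMax.1 hD
    obtain ⟨C, hCS, rfl⟩ := subset_map_iff.1 hDS
    exact ⟨C, by simpa [max_lt_max_iff, hCS] using hDmax, rfl⟩

lemma sum_powerset_eq_sum_powersetBelowMax (U : Finset α) (G : Finset α → Finset α → M)
    (hG : G ∅ ∅ = 0) :
    ∑ C ∈ U.powerset, G C (U \ C) = ∑ C ∈ powersetBelowMax U, (G C (U \ C) + G (U \ C) C) := by
  rcases U.eq_empty_or_nonempty with rfl | hU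
  · simp [powersetBelowMax, hG]
  rw [sum_add_distrib, ← sum_filter_add_sum_filter_not U.powerset (·.max < U.max)]
  congr 1
  -- `C ↦ U \ C` exchanges the subsets containing `max U` with those avoiding it.
  refine sum_nbij' (U \ ·) (U \ ·) ?_ ?_ ?_ ?_ ?_
  · intro C hC
    obtain ⟨hCU, hC⟩ := by simpa only [mem_filter, mem_powerset] using hC
    rw [max_lt_max_iff_max_lt_max_sdiff hCU, not_lt] at hC
    have hne : (U \ C).max ≠ C.max :=
      max_ne_max_of_disjoint sdiff_disjoint (by rwa [sdiff_union_of_subset hCU])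
    refine mem_powersetBelowMax.2 ⟨sdiff_subset, ?_⟩
    rw [max_lt_max_iff_max_lt_max_sdiff sdiff_subset, Finset.sdiff_sdiff_eq_self hCU]
    exact lt_of_le_of_ne hC hne
  · intro D hD
    obtain ⟨hDU, hD⟩ := mem_powersetBelowMax.1 hD
    rw [max_lt_max_iff_max_lt_max_sdiff hDU] at hD
    refine mem_filter.2 ⟨mem_powerset.2 sdiff_subset, ?_⟩
    rw [max_lt_max_iff_max_lt_max_sdiff sdiff_subset, Finset.sdiff_sdiff_eq_self hDU, not_lt]
    exact hD.le
  · intro C hC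
    exact Finset.sdiff_sdiff_eq_self (mem_powerset.1 (mem_filter.1 hC).1)
  · intro D hD
    exact Finset.sdiff_sdiff_eq_self (mem_powersetBelowMax.1 hD).1
  · intro C hC
    rw [Finset.sdiff_sdiff_eq_self (mem_powerset.1 (mem_filter.1 hC).1)]

lemma sum_powersetBelowMax_sdiff_eq_sum_powerset (S : Finset α)
    (F : Finset α → Finset α → Finset α → M) :
    ∑ A ∈ powersetBelowMax S, ∑ B ∈ powersetBelowMax (S \ A), F A B ((S \ A) \ B) =
      ∑ U ∈ powersetBelowMax S, ∑ C ∈ U.powerset, F C (U \ C) (S \ U) := by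
  rw [sum_sigma', sum_sigma']
  refine sum_nbij' (fun z => ⟨z.1 ∪ z.2, z.1⟩) (fun w => ⟨w.2, w.1 \ w.2⟩) ?_ ?_ ?_ ?_ ?_
  · rintro ⟨A, B⟩ h
    simp only [mem_sigma, mem_powersetBelowMax, mem_powerset] at h ⊢
    obtain ⟨⟨hAS, hA⟩, hBS, hB⟩ := h
    rw [max_sdiff_eq_of_max_lt_max hAS hA] at hB
    refine ⟨⟨union_subset hAS (hBS.trans sdiff_subset), ?_⟩, subset_union_left⟩
    rw [max_union]
    exact sup_lt_iff.2 ⟨hA, hB⟩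
  · rintro ⟨U, C⟩ h
    simp only [mem_sigma, mem_powersetBelowMax, mem_powerset] at h ⊢
    obtain ⟨⟨hUS, hU⟩, hCU⟩ := h
    have hC : C.max < S.max := (max_mono hCU).trans_lt hU
    refine ⟨⟨hCU.trans hUS, hC⟩, sdiff_subset_sdiff hUS le_rfl, ?_⟩
    rw [max_sdiff_eq_of_max_lt_max (hCU.trans hUS) hC]
    exact (max_mono sdiff_subset).trans_lt hU
  · rintro ⟨A, B⟩ h
    simp only [mem_sigma, mem_powersetBelowMax] at h
    have hAB : Disjoint A B := disjoint_of_subset_right h.2.1 disjoint_sdiff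
    simp [union_sdiff_cancel_left hAB]
  · rintro ⟨U, C⟩ h
    simp only [mem_sigma, mem_powerset] at h
    simp [union_sdiff_of_subset h.2]
  · rintro ⟨A, B⟩ h
    simp only [mem_sigma, mem_powersetBelowMax] at h
    have hAB : Disjoint A B := disjoint_of_subset_right h.2.1 disjoint_sdiff
    simp [union_sdiff_cancel_left hAB, _root_.sdiff_sdiff_left]

lemma sum_powersetBelowMax_sdiff_eq_sum_powersetBelowMax (S : Finset α)
    (F : Finset α → Finset α → Finset α → M) (hF : ∀ R, F ∅ ∅ R = 0) :
    ∑ A ∈ powersetBelowMax S, ∑ B ∈ powersetBelowMax (S \ A), F A B ((S \ A) \ B) =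
      ∑ U ∈ powersetBelowMax S, ∑ C ∈ powersetBelowMax U,
        (F C (U \ C) (S \ U) + F (U \ C) C (S \ U)) := by
  rw [sum_powersetBelowMax_sdiff_eq_sum_powerset]
  exact sum_congr rfl fun U _ =>
    sum_powerset_eq_sum_powersetBelowMax U (fun C D => F C D (S \ U)) (hF _)

end Combinatorics

section TensorWord

variable {K : Type*} [Field K] {V : Type*} [AddCommGroup V] [Module K V]

/-- The word `x_S` in the letters `x a`, `a ∈ S`, read in increasing order; `x_∅ = 0` since `T̄V`
has no degree-zero part. -/
noncomputable def tensorWord {α : Type*} [LinearOrder α] (x : α → V) (S : Finset α) :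
    ReducedTensorModule K V :=
  if h : S.card = S.card - 1 + 1 then
    reducedTensorIncl K V (S.card - 1) (PiTensorProduct.tprod K (x ∘ S.orderEmbOfFin h))
  else 0

variable {α : Type*} [LinearOrder α]

@[simp] lemma tensorWord_empty (x : α → V) : tensorWord (K := K) x ∅ = 0 := by
  simp [tensorWord]

lemma tensorWord_of_card_eq {n : ℕ} (x : α → V) {S : Finset α} (h : S.card = n + 1) :
    tensorWord (K := K) x S =
      reducedTensorIncl K V n (PiTensorProduct.tprod K (x ∘ S.orderEmbOfFin h)) := by
  obtain rfl : S.card - 1 = n := by omega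
  rw [tensorWord, dif_pos h]

lemma tensorWord_map {β : Type*} [LinearOrder β] (e : β ↪o α) (x : α → V) (C : Finset β) :
    tensorWord (K := K) x (C.map e.toEmbedding) = tensorWord (x ∘ e) C := by
  rcases C.eq_empty_or_nonempty with rfl | hC
  · simp
  obtain ⟨n, hn⟩ : ∃ n, C.card = n + 1 := ⟨C.card - 1, by have := hC.card_pos; omega⟩
  have hn' : (C.map e.toEmbedding).card = n + 1 := by rw [card_map, hn]
  have hemb : ⇑((C.map e.toEmbedding).orderEmbOfFin hn') = e ∘ C.orderEmbOfFin hn :=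
    (orderEmbOfFin_unique hn' (fun _ => mem_map_of_mem _ (orderEmbOfFin_mem _ _ _))
      (e.strictMono.comp (C.orderEmbOfFin hn).strictMono)).symm
  rw [tensorWord_of_card_eq x hn', tensorWord_of_card_eq _ hn, hemb]
  rfl

lemma tensorWord_univ {n : ℕ} (x : Fin (n + 1) → V) :
    tensorWord (K := K) x univ = reducedTensorIncl K V n (PiTensorProduct.tprod K x) := by
  have hid : ⇑((univ : Finset (Fin (n + 1))).orderEmbOfFin (card_fin _)) = id :=
    (orderEmbOfFin_unique _ (fun _ => mem_univ _) strictMono_id).symm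
  rw [tensorWord_of_card_eq x (card_fin _), hid]
  rfl

end TensorWord

section Unshuffle

/-- `σ` is increasing on `{0, …, i}` and on `{i + 1, …}`: its left block has `i + 1` elements. -/
def IsUnshuffle {n : ℕ} (i : Fin n) (σ : Equiv.Perm (Fin n)) : Prop :=
  ∀ a b : Fin n, a < b → ((b : ℕ) ≤ (i : ℕ) ∨ (i : ℕ) + 1 ≤ (a : ℕ)) → σ a < σ b

instance {n : ℕ} (i : Fin n) : DecidablePred (IsUnshuffle i) := fun σ =>
  inferInstanceAs
    (Decidable (∀ a b : Fin n, a < b → ((b : ℕ) ≤ (i : ℕ) ∨ (i : ℕ) + 1 ≤ (a : ℕ)) → σ a < σ b))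

lemma exists_isUnshuffle_image_Iic_eq {n : ℕ} {i : Fin n} {C : Finset (Fin n)}
    (hC : C.card = i + 1) : ∃ σ : Equiv.Perm (Fin n), IsUnshuffle i σ ∧ (Iic i).image σ = C := by
  have hCc : Cᶜ.card = n - (i + 1) := by rw [card_compl, Fintype.card_fin, hC]
  have hn : n = (i + 1) + (n - (i + 1)) := by omega
  let σ : Equiv.Perm (Fin n) :=
    (finCongr hn).trans (finSumFinEquiv.symm.trans (finSumEquivOfFinset hC hCc))
  have hσ_lt (a : Fin n) (h : (a : ℕ) < i + 1) : σ a = C.orderEmbOfFin hC ⟨a, h⟩ := by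
    have : finCongr hn a = Fin.castAdd _ ⟨a, h⟩ := rfl
    simp only [σ, Equiv.trans_apply, this, finSumFinEquiv_symm_apply_castAdd,
      finSumEquivOfFinset_inl]
  have hσ_ge (a : Fin n) (h : i + 1 ≤ (a : ℕ)) :
      σ a = Cᶜ.orderEmbOfFin hCc ⟨a - (i + 1), by omega⟩ := by
    have : finCongr hn a = Fin.natAdd _ ⟨a - (i + 1), by omega⟩ := Fin.ext (by simp; omega)
    simp only [σ, Equiv.trans_apply, this, finSumFinEquiv_symm_apply_natAdd,
      finSumEquivOfFinset_inr]
  refine ⟨σ, ?_, ?_⟩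
  · rintro a b hab (hb | ha)
    · rw [hσ_lt a (by omega), hσ_lt b (by omega)]
      exact (C.orderEmbOfFin hC).strictMono hab
    · rw [hσ_ge a ha, hσ_ge b (by omega)]
      exact (Cᶜ.orderEmbOfFin hCc).strictMono (Fin.mk_lt_mk.2 (by omega))
  · refine eq_of_subset_of_card_le (fun c hc => ?_) ?_
    · obtain ⟨a, ha, rfl⟩ := mem_image.1 hc
      rw [hσ_lt a (Nat.lt_succ_of_le (Fin.le_def.1 (Finset.mem_Iic.1 ha)))]
      exact orderEmbOfFin_mem _ _ _
    · rw [card_image_of_injective _ σ.injective, Fin.card_Iic, hC]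

variable {p : ℕ}

def unshuffleHead (i : Fin (p + 1)) (σ : Equiv.Perm (Fin (p + 1))) : Finset (Fin (p + 2)) :=
  (Iic i).image fun j => (σ j).castSucc

lemma mem_unshuffleHead {i : Fin (p + 1)} {σ : Equiv.Perm (Fin (p + 1))} {a : Fin (p + 2)} :
    a ∈ unshuffleHead i σ ↔ ∃ j ≤ i, (σ j).castSucc = a := by
  simp [unshuffleHead]

lemma card_unshuffleHead (i : Fin (p + 1)) (σ : Equiv.Perm (Fin (p + 1))) :
    (unshuffleHead i σ).card = i + 1 := by
  rw [unshuffleHead,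
    card_image_of_injective _ fun a b h => σ.injective (Fin.castSucc_injective _ h), Fin.card_Iic]

lemma card_compl_unshuffleHead (i : Fin (p + 1)) (σ : Equiv.Perm (Fin (p + 1))) :
    (univ \ unshuffleHead i σ).card = p - i + 1 := by
  rw [card_sdiff_of_subset (subset_univ _), card_univ, Fintype.card_fin, card_unshuffleHead]
  omega

lemma unshuffleHead_mem_powersetBelowMax (i : Fin (p + 1)) (σ : Equiv.Perm (Fin (p + 1))) :
    unshuffleHead i σ ∈ powersetBelowMax univ := by
  refine mem_powersetBelowMax.2 ⟨subset_univ _, max_lt_max_iff.2 ⟨Fin.last _, mem_univ _, ?_⟩⟩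
  intro a ha
  obtain ⟨j, -, rfl⟩ := mem_unshuffleHead.1 ha
  exact Fin.castSucc_lt_last _

lemma exists_unshuffleHead_eq {C : Finset (Fin (p + 2))} (hC : C ∈ powersetBelowMax univ)
    (hne : C.Nonempty) : ∃ i σ, IsUnshuffle i σ ∧ unshuffleHead i σ = C := by
  obtain ⟨b, -, hb⟩ := max_lt_max_iff.1 (mem_powersetBelowMax.1 hC).2
  have hlast (a) (ha : a ∈ C) : a ≠ Fin.last _ := ((hb a ha).trans_le (Fin.le_last b)).ne
  set C₀ := univ.filter fun j : Fin (p + 1) => j.castSucc ∈ C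
  have hC₀ : C₀.image Fin.castSucc = C := by
    ext a
    simp only [C₀, mem_image, mem_filter, mem_univ, true_and]
    refine ⟨fun ⟨j, hj, hja⟩ => hja ▸ hj, fun ha => ⟨a.castPred (hlast a ha), ?_, ?_⟩⟩ <;>
      rw [Fin.castSucc_castPred]
    exact ha
  have hcard : C₀.card = C.card := by
    rw [← hC₀, card_image_of_injective _ (Fin.castSucc_injective _)]
  have hCle : C.card ≤ p + 1 := hcard ▸ card_le_univ C₀ |>.trans_eq (Fintype.card_fin _)
  have hCpos := hne.card_pos
  obtain ⟨σ, hσ, himage⟩ := exists_isUnshuffle_image_Iic_eq (i := ⟨C.card - 1, by omega⟩)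
    (C := C₀) (by simp only; omega)
  refine ⟨_, σ, hσ, ?_⟩
  rw [unshuffleHead]
  conv_rhs => rw [← hC₀, ← himage, image_image]
  rfl

lemma IsUnshuffle.orderEmbOfFin_unshuffleHead {i : Fin (p + 1)} {σ : Equiv.Perm (Fin (p + 1))}
    (hσ : IsUnshuffle i σ) {C : Finset (Fin (p + 2))} (hC : unshuffleHead i σ = C)
    (hcard : C.card = i + 1) :
    ⇑(C.orderEmbOfFin hcard) = fun j : Fin (i + 1) => (σ (Fin.castLE i.2 j)).castSucc := by
  refine (orderEmbOfFin_unique hcard (fun j => ?_) fun a b hab => ?_).symm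
  · exact hC ▸ mem_unshuffleHead.2 ⟨_, Fin.le_def.2 (Nat.le_of_lt_succ j.2), rfl⟩
  · exact Fin.castSucc_lt_castSucc_iff.2 (hσ _ _ hab (Or.inl (Nat.le_of_lt_succ b.2)))

lemma IsUnshuffle.orderEmbOfFin_compl_unshuffleHead {i : Fin (p + 1)}
    {σ : Equiv.Perm (Fin (p + 1))} (hσ : IsUnshuffle i σ) {D : Finset (Fin (p + 2))}
    (hD : univ \ unshuffleHead i σ = D) (hcard : D.card = p - i + 1) :
    ⇑(D.orderEmbOfFin hcard) = fun k : Fin (p - i + 1) =>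
      if h : (k : ℕ) + i + 1 < p + 1 then (σ ⟨k + i + 1, h⟩).castSucc else Fin.last (p + 1) := by
  refine (orderEmbOfFin_unique hcard (fun k => ?_) fun k k' hkk' => ?_).symm
  · subst hD
    simp only [mem_sdiff, mem_univ, true_and, mem_unshuffleHead, not_exists, not_and]
    split_ifs with h
    · intro j hj hj'
      obtain rfl := σ.injective (Fin.castSucc_injective _ hj')
      simp [Fin.le_def] at hj
    · exact fun j _ hj' => Fin.castSucc_ne_last _ hj'
  · have hk : (k : ℕ) + i + 1 < p + 1 := by
      have := k'.2
      have : (k : ℕ) < k' := hkk'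
      omega
    simp only [dif_pos hk]
    split_ifs with hk'
    · exact Fin.castSucc_lt_castSucc_iff.2
        (hσ _ _ (Fin.mk_lt_mk.2 (by have : (k : ℕ) < k' := hkk'; omega)) (Or.inr (by simp)))
    · exact Fin.castSucc_lt_last _

lemma IsUnshuffle.eq_of_unshuffleHead_eq {i : Fin (p + 1)} {σ τ : Equiv.Perm (Fin (p + 1))}
    (hσ : IsUnshuffle i σ) (hτ : IsUnshuffle i τ) (h : unshuffleHead i σ = unshuffleHead i τ) :
    σ = τ := by
  have hhead := (hσ.orderEmbOfFin_unshuffleHead rfl (card_unshuffleHead i σ)).symm.trans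
    (hτ.orderEmbOfFin_unshuffleHead h.symm _)
  have htail := (hσ.orderEmbOfFin_compl_unshuffleHead rfl (card_compl_unshuffleHead i σ)).symm.trans
    (hτ.orderEmbOfFin_compl_unshuffleHead (by rw [h]) _)
  refine Equiv.ext fun a => ?_
  rcases Nat.lt_or_ge a (i + 1) with ha | ha
  · exact Fin.castSucc_injective _ (congrFun hhead ⟨a, ha⟩)
  · obtain ⟨k, hk⟩ : ∃ k, (a : ℕ) = k + i + 1 := ⟨a - (i + 1), by omega⟩
    have hka : k + i + 1 < p + 1 := hk ▸ a.2
    have := congrFun htail ⟨k, by omega⟩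
    simp only [dif_pos hka] at this
    rw [show a = ⟨k + i + 1, hka⟩ from Fin.ext hk]
    exact Fin.castSucc_injective _ this

end Unshuffle

section UnshuffleCoproduct

variable {K : Type*} [Field K] {V : Type*} [AddCommGroup V] [Module K V]

noncomputable def unshuffleTerm {p : ℕ} (x : Fin (p + 2) → V) (i : Fin (p + 1))
    (σ : Equiv.Perm (Fin (p + 1))) : ReducedTensorModule K V ⊗[K] ReducedTensorModule K V :=
  (reducedTensorIncl K V i (PiTensorProduct.tprod K
    (fun j : Fin ((i : ℕ) + 1) => x (Fin.castSucc (σ (Fin.castLE i.2 j)))))) ⊗ₜ[K]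
  (reducedTensorIncl K V ((p : ℕ) - (i : ℕ)) (PiTensorProduct.tprod K
    (fun k : Fin ((p : ℕ) - (i : ℕ) + 1) =>
      if h : (k : ℕ) + (i : ℕ) + 1 < p + 1 then
        x (Fin.castSucc (σ ⟨(k : ℕ) + (i : ℕ) + 1, h⟩))
      else x (Fin.last (p + 1)))))

def IsUnshuffleCoproduct
    (Δ : ReducedTensorModule K V →ₗ[K] ReducedTensorModule K V ⊗[K] ReducedTensorModule K V) :
    Prop :=
  (∀ x : Fin 1 → V, Δ (reducedTensorIncl K V 0 (PiTensorProduct.tprod K x)) = 0) ∧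
  ∀ (p : ℕ) (x : Fin (p + 2) → V),
    Δ (reducedTensorIncl K V (p + 1) (PiTensorProduct.tprod K x)) =
      ∑ i : Fin (p + 1), ∑ σ : Equiv.Perm (Fin (p + 1)),
        if IsUnshuffle i σ then unshuffleTerm x i σ else 0

lemma IsUnshuffle.unshuffleTerm_eq {p : ℕ} {i : Fin (p + 1)} {σ : Equiv.Perm (Fin (p + 1))}
    (hσ : IsUnshuffle i σ) (x : Fin (p + 2) → V) :
    unshuffleTerm (K := K) x i σ =
      tensorWord x (unshuffleHead i σ) ⊗ₜ tensorWord x (univ \ unshuffleHead i σ) := by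
  rw [tensorWord_of_card_eq x (card_unshuffleHead i σ),
    tensorWord_of_card_eq x (card_compl_unshuffleHead i σ),
    hσ.orderEmbOfFin_unshuffleHead rfl, hσ.orderEmbOfFin_compl_unshuffleHead rfl]
  simp only [unshuffleTerm, Function.comp_def, apply_dite x]

lemma sum_unshuffleTerm_eq {p : ℕ} (x : Fin (p + 2) → V) :
    ∑ i : Fin (p + 1), ∑ σ : Equiv.Perm (Fin (p + 1)),
        (if IsUnshuffle i σ then unshuffleTerm (K := K) x i σ else 0) =
      ∑ C ∈ powersetBelowMax univ, tensorWord x C ⊗ₜ[K] tensorWord x (univ \ C) := by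
  rw [← sum_filter_of_ne (p := Finset.Nonempty) fun C _ hC =>
    nonempty_iff_ne_empty.2 (by rintro rfl; simp at hC)]
  simp only [← sum_filter]
  rw [sum_sigma']
  refine sum_bij (fun z _ => unshuffleHead z.1 z.2) ?_ ?_ ?_ ?_
  · rintro ⟨i, σ⟩ -
    exact mem_filter.2 ⟨unshuffleHead_mem_powersetBelowMax i σ,
      card_pos.1 (by rw [card_unshuffleHead]; omega)⟩
  · rintro ⟨i, σ⟩ hσ ⟨i', σ'⟩ hσ' h
    simp only [mem_sigma, mem_filter, mem_univ, true_and] at hσ hσ' h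
    obtain rfl : i = i' := Fin.ext (by simpa [card_unshuffleHead] using congrArg card h)
    rw [hσ.eq_of_unshuffleHead_eq hσ' h]
  · intro C hC
    obtain ⟨i, σ, hσ, rfl⟩ := exists_unshuffleHead_eq (mem_filter.1 hC).1 (mem_filter.1 hC).2
    exact ⟨⟨i, σ⟩, by simpa using hσ, rfl⟩
  · rintro ⟨i, σ⟩ hσ
    exact (mem_filter.1 (mem_sigma.1 hσ).2).2.unshuffleTerm_eq x

variable {Δ : ReducedTensorModule K V →ₗ[K] ReducedTensorModule K V ⊗[K] ReducedTensorModule K V}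

lemma IsUnshuffleCoproduct.apply_tprod (hΔ : IsUnshuffleCoproduct Δ) {n : ℕ}
    (x : Fin (n + 1) → V) :
    Δ (reducedTensorIncl K V n (PiTensorProduct.tprod K x)) =
      ∑ C ∈ powersetBelowMax univ, tensorWord x C ⊗ₜ[K] tensorWord x (univ \ C) := by
  cases n with
  | zero =>
    refine (hΔ.1 x).trans (sum_eq_zero fun C hC => ?_).symm
    obtain ⟨b, -, hb⟩ := max_lt_max_iff.1 (mem_powersetBelowMax.1 hC).2
    obtain rfl : C = ∅ :=
      eq_empty_of_forall_notMem fun a ha => (hb a ha).ne (Subsingleton.elim (α := Fin 1) _ _)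
    simp
  | succ p => rw [hΔ.2, sum_unshuffleTerm_eq]

lemma IsUnshuffleCoproduct.apply_tensorWord (hΔ : IsUnshuffleCoproduct Δ) {α : Type*}
    [LinearOrder α] (x : α → V) (S : Finset α) :
    Δ (tensorWord x S) = ∑ C ∈ powersetBelowMax S, tensorWord x C ⊗ₜ[K] tensorWord x (S \ C) := by
  rcases S.eq_empty_or_nonempty with rfl | hS
  · simp [powersetBelowMax]
  obtain ⟨n, hn⟩ : ∃ n, S.card = n + 1 := ⟨S.card - 1, by have := hS.card_pos; omega⟩
  rw [← map_orderEmbOfFin_univ S hn, tensorWord_map, tensorWord_univ, hΔ.apply_tprod,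
    sum_powersetBelowMax_map]
  refine sum_congr rfl fun C _ => ?_
  rw [← Finset.map_sdiff, tensorWord_map, tensorWord_map]

lemma IsUnshuffleCoproduct.coidentity_tensorWord (hΔ : IsUnshuffleCoproduct Δ) {α : Type*}
    [LinearOrder α] (x : α → V) (S : Finset α) :
    TensorProduct.map LinearMap.id Δ (Δ (tensorWord x S)) =
      TensorProduct.assoc K _ _ _ (TensorProduct.map Δ LinearMap.id (Δ (tensorWord x S))) +
      TensorProduct.assoc K _ _ _ (TensorProduct.map (TensorProduct.comm K _ _).toLinearMap
        LinearMap.id (TensorProduct.map Δ LinearMap.id (Δ (tensorWord x S)))) := by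
  simp only [hΔ.apply_tensorWord, map_sum, TensorProduct.map_tmul, LinearMap.id_apply,
    TensorProduct.tmul_sum, TensorProduct.sum_tmul, LinearEquiv.coe_coe, TensorProduct.comm_tmul,
    TensorProduct.assoc_tmul, ← sum_add_distrib]
  exact sum_powersetBelowMax_sdiff_eq_sum_powersetBelowMax S
    (fun A B R => tensorWord x A ⊗ₜ[K] (tensorWord x B ⊗ₜ[K] tensorWord x R)) (by simp)

end UnshuffleCoproduct

theorem zinbiel_coidentity_general (K : Type*) [Field K] (V : Type*) [AddCommGroup V]
    [Module K V]
    (Δ : ReducedTensorModule K V →ₗ[K] ReducedTensorModule K V ⊗[K] ReducedTensorModule K V)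
    (hΔ₀ : ∀ x : Fin 1 → V,
      Δ (reducedTensorIncl K V 0 (PiTensorProduct.tprod K x)) = 0)
    (hΔ : ∀ (p : ℕ) (x : Fin (p + 2) → V),
      Δ (reducedTensorIncl K V (p + 1) (PiTensorProduct.tprod K x)) =
        ∑ i : Fin (p + 1), ∑ σ : Equiv.Perm (Fin (p + 1)),
          if (∀ a b : Fin (p + 1), a < b → ((b : ℕ) ≤ (i : ℕ) ∨ (i : ℕ) + 1 ≤ (a : ℕ)) →
              σ a < σ b) then
            (reducedTensorIncl K V i (PiTensorProduct.tprod K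
              (fun j : Fin ((i : ℕ) + 1) =>
                x (Fin.castSucc (σ (Fin.castLE i.2 j)))))) ⊗ₜ[K]
            (reducedTensorIncl K V ((p : ℕ) - (i : ℕ)) (PiTensorProduct.tprod K
              (fun k : Fin ((p : ℕ) - (i : ℕ) + 1) =>
                if h : (k : ℕ) + (i : ℕ) + 1 < p + 1 then
                  x (Fin.castSucc (σ ⟨(k : ℕ) + (i : ℕ) + 1, h⟩))
                else x (Fin.last (p + 1)))))
          else 0) :
    (TensorProduct.map LinearMap.id Δ) ∘ₗ Δ =
      ((TensorProduct.assoc K (ReducedTensorModule K V) (ReducedTensorModule K V)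
          (ReducedTensorModule K V)).toLinearMap ∘ₗ
        (TensorProduct.map Δ LinearMap.id) ∘ₗ Δ) +
      ((TensorProduct.assoc K (ReducedTensorModule K V) (ReducedTensorModule K V)
          (ReducedTensorModule K V)).toLinearMap ∘ₗ
        (TensorProduct.map
          (TensorProduct.comm K (ReducedTensorModule K V)
            (ReducedTensorModule K V)).toLinearMap LinearMap.id) ∘ₗ
        (TensorProduct.map Δ LinearMap.id) ∘ₗ Δ) := by
  have hΔ' : IsUnshuffleCoproduct Δ := ⟨hΔ₀, hΔ⟩
  refine DirectSum.linearMap_ext _ fun p => PiTensorProduct.ext <| MultilinearMap.ext fun x => ?_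
  have := hΔ'.coidentity_tensorWord x univ
  rw [tensorWord_univ] at this
  simp only [LinearMap.compMultilinearMap_apply, LinearMap.comp_apply, LinearMap.add_apply,
    LinearEquiv.coe_coe]
  exact this

/-- **Cofree Zinbiel coalgebra (Ammar–Poncin), ungraded core.**
Let `Δ : T̄V → T̄V ⊗ T̄V` be the linear map vanishing on `V` and given on a pure tensor
`x₁ ⊗ ⋯ ⊗ x_m` (`m ≥ 2`) by
`Δ(x₁ ⊗ ⋯ ⊗ x_m) = Σ_{i=1}^{m-1} Σ_σ (x_{σ(1)} ⊗ ⋯ ⊗ x_{σ(i)}) ⊗ (x_{σ(i+1)} ⊗ ⋯ ⊗ x_{σ(m-1)} ⊗ x_m)`,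
where `σ` runs over the `(i, m-1-i)`-unshuffles of `{1, …, m-1}`.
Then `Δ` satisfies the Zinbiel co-identity
`(id ⊗ Δ) ∘ Δ = (Δ ⊗ id) ∘ Δ + (τ ⊗ id) ∘ (Δ ⊗ id) ∘ Δ` (up to the associator),
where `τ` is the flip. -/
theorem zinbiel_coidentity (K : Type*) [Field K] [CharZero K] (V : Type*) [AddCommGroup V]
    [Module K V]
    (Δ : ReducedTensorModule K V →ₗ[K] ReducedTensorModule K V ⊗[K] ReducedTensorModule K V)
    (hΔ₀ : ∀ x : Fin 1 → V,
      Δ (reducedTensorIncl K V 0 (PiTensorProduct.tprod K x)) = 0)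
    (hΔ : ∀ (p : ℕ) (x : Fin (p + 2) → V),
      Δ (reducedTensorIncl K V (p + 1) (PiTensorProduct.tprod K x)) =
        ∑ i : Fin (p + 1), ∑ σ : Equiv.Perm (Fin (p + 1)),
          if (∀ a b : Fin (p + 1), a < b → ((b : ℕ) ≤ (i : ℕ) ∨ (i : ℕ) + 1 ≤ (a : ℕ)) →
              σ a < σ b) then
            (reducedTensorIncl K V i (PiTensorProduct.tprod K
              (fun j : Fin ((i : ℕ) + 1) =>
                x (Fin.castSucc (σ (Fin.castLE i.2 j)))))) ⊗ₜ[K]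
            (reducedTensorIncl K V ((p : ℕ) - (i : ℕ)) (PiTensorProduct.tprod K
              (fun k : Fin ((p : ℕ) - (i : ℕ) + 1) =>
                if h : (k : ℕ) + (i : ℕ) + 1 < p + 1 then
                  x (Fin.castSucc (σ ⟨(k : ℕ) + (i : ℕ) + 1, h⟩))
                else x (Fin.last (p + 1)))))
          else 0) :
    (TensorProduct.map LinearMap.id Δ) ∘ₗ Δ =
      ((TensorProduct.assoc K (ReducedTensorModule K V) (ReducedTensorModule K V)
          (ReducedTensorModule K V)).toLinearMap ∘ₗ
        (TensorProduct.map Δ LinearMap.id) ∘ₗ Δ) +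
      ((TensorProduct.assoc K (ReducedTensorModule K V) (ReducedTensorModule K V)
          (ReducedTensorModule K V)).toLinearMap ∘ₗ
        (TensorProduct.map
          (TensorProduct.comm K (ReducedTensorModule K V)
            (ReducedTensorModule K V)).toLinearMap LinearMap.id) ∘ₗ
        (TensorProduct.map Δ LinearMap.id) ∘ₗ Δ) :=
  zinbiel_coidentity_general K V Δ hΔ₀ hΔ
end

section
/- Let n ≥ 2 and 1 ≤ a ≤ n-1. The number of n-tuples (w₁, …, w_n) of finite words over the positive integers such that the total number of letters occurring in w₁, …, w_n equals a and the sum of all letters occurring in w₁, …, w_n equals n-1, is equal to C(n+a-1, a) · C(n-2, a-1). -/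
/-!
Cutting a word at prescribed lengths identifies an `n`-tuple of words with the pair formed by
its vector of lengths, a weak composition of `a` into `n` parts (`C(n+a-1, a)` of them, by stars
and bars), and the concatenated word. The concatenation is a composition of `n-1` into `a`
positive parts; subtracting `1` from each letter makes it a weak composition of `n-1-a` into `a`
parts, of which there are `C(n-2, a-1)`.
-/

namespace List

variable {α : Type*} {n : ℕ}

theorem splitLengths_map_length_flatten (L : List (List α)) :
    (L.map length).splitLengths L.flatten = L :=
  eq_iff_flatten_eq.2
    ⟨flatten_splitLengths _ _ length_flatten.le, map_splitLengths_length _ _ length_flatten.ge⟩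

theorem length_flatten_ofFn (w : Fin n → List α) :
    (ofFn w).flatten.length = ∑ j, (w j).length := by
  simp [length_flatten, sum_ofFn]

theorem sum_map_flatten_ofFn {M : Type*} [AddCommMonoid M] (w : Fin n → List α) (f : α → M) :
    ((ofFn w).flatten.map f).sum = ∑ j, ((w j).map f).sum := by
  simp [map_flatten, sum_flatten, sum_ofFn]

def splitFin (c : Fin n → ℕ) (l : List α) : Fin n → List α :=
  fun j => ((ofFn c).splitLengths l)[j]'(by simp)

theorem ofFn_splitFin (c : Fin n → ℕ) (l : List α) :
    ofFn (l.splitFin c) = (ofFn c).splitLengths l := by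
  apply ext_getElem <;> simp [splitFin]

theorem length_splitFin {c : Fin n → ℕ} {l : List α} (h : ∑ j, c j ≤ l.length) (j : Fin n) :
    (l.splitFin c j).length = c j := by
  rw [← sum_ofFn] at h
  simp [splitFin, splitLengths_length_getElem _ _ h]

theorem flatten_ofFn_splitFin {c : Fin n → ℕ} {l : List α} (h : l.length ≤ ∑ j, c j) :
    (ofFn (l.splitFin c)).flatten = l := by
  rw [← sum_ofFn] at h
  rw [ofFn_splitFin, flatten_splitLengths _ _ h]

theorem splitFin_flatten_ofFn (w : Fin n → List α) :
    (ofFn w).flatten.splitFin (fun j => (w j).length) = w := by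
  apply ofFn_injective
  rw [ofFn_splitFin, show ofFn (fun j => (w j).length) = (ofFn w).map length
    from (map_ofFn ..).symm, splitLengths_map_length_flatten]

end List

section Words

variable {α M : Type*} [AddCommMonoid M]

def wordTuplesEquiv (n a : ℕ) (f : α → M) (s : M) :
    {w : Fin n → List α // ∑ j, (w j).length = a ∧ ∑ j, ((w j).map f).sum = s} ≃
      {c : Fin n → ℕ // ∑ j, c j = a} × {l : List α // l.length = a ∧ (l.map f).sum = s} where
  toFun w := (⟨fun j => (w.1 j).length, w.2.1⟩,
    ⟨(List.ofFn w.1).flatten, by rw [List.length_flatten_ofFn, w.2.1],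
      by rw [List.sum_map_flatten_ofFn, w.2.2]⟩)
  invFun p := ⟨p.2.1.splitFin p.1.1, by
    have hlen : p.2.1.length = ∑ j, p.1.1 j := p.2.2.1.trans p.1.2.symm
    refine ⟨?_, ?_⟩
    · simp only [List.length_splitFin hlen.ge, p.1.2]
    · rw [← List.sum_map_flatten_ofFn, List.flatten_ofFn_splitFin hlen.le, p.2.2.2]⟩
  left_inv w := Subtype.ext (List.splitFin_flatten_ofFn w.1)
  right_inv p := by
    have hlen : p.2.1.length = ∑ j, p.1.1 j := p.2.2.1.trans p.1.2.symm
    exact Prod.ext (Subtype.ext (funext (List.length_splitFin hlen.ge)))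
      (Subtype.ext (List.flatten_ofFn_splitFin hlen.le))

def wordsOfLengthEquiv (k : ℕ) (f : α → M) (s : M) :
    {l : List α // l.length = k ∧ (l.map f).sum = s} ≃ {g : Fin k → α // ∑ i, f (g i) = s} :=
  (Equiv.subtypeSubtypeEquivSubtypeInter (fun l : List α => l.length = k) _).symm.trans <|
    (Equiv.vectorEquivFin α k).subtypeEquiv fun v => by
      show (v.toList.map f).sum = s ↔ ∑ i, (f ∘ v.get) i = s
      rw [← List.sum_ofFn, ← List.map_ofFn, ← List.Vector.toList_ofFn, v.ofFn_get]

end Words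

section Compositions

variable (ι : Type*) [Fintype ι]

def pnatTuplesEquiv (s : ℕ) :
    {g : ι → ℕ+ // ∑ i, (g i : ℕ) = s + Fintype.card ι} ≃ {c : ι → ℕ // ∑ i, c i = s} :=
  (Equiv.piCongrRight fun _ => Equiv.pnatEquivNat).subtypeEquiv fun g => by
    simp [← PNat.natPred_add_one, Finset.sum_add_distrib]

instance finite_tuples_sum_eq (m : ℕ) : Finite {c : ι → ℕ // ∑ i, c i = m} := by
  classical
  exact Finite.of_equiv _ (Sym.equivNatSumOfFintype ι m)

instance finite_pnat_tuples_sum_eq (s : ℕ) : Finite {g : ι → ℕ+ // ∑ i, (g i : ℕ) = s} :=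
  Finite.of_injective (fun g => (⟨fun i => g.1 i, g.2⟩ : {c : ι → ℕ // ∑ i, c i = s}))
    fun _ _ h => Subtype.ext <| funext fun i =>
      PNat.coe_injective <| congrFun (congrArg Subtype.val h) i

theorem card_tuples_sum_eq (m : ℕ) :
    Nat.card {c : ι → ℕ // ∑ i, c i = m} = (Fintype.card ι + m - 1).choose m := by
  classical
  rw [← Nat.card_congr (Sym.equivNatSumOfFintype ι m), Nat.card_eq_fintype_card,
    Sym.card_sym_eq_choose]

theorem card_pnat_tuples_sum_eq {s : ℕ} (hι : 0 < Fintype.card ι) (hs : Fintype.card ι ≤ s) :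
    Nat.card {g : ι → ℕ+ // ∑ i, (g i : ℕ) = s} = (s - 1).choose (Fintype.card ι - 1) := by
  obtain ⟨m, rfl⟩ : ∃ m, s = m + Fintype.card ι := ⟨s - Fintype.card ι, by omega⟩
  rw [Nat.card_congr (pnatTuplesEquiv ι m), card_tuples_sum_eq, add_comm m]
  exact Nat.choose_symm_of_eq_add (by omega : Fintype.card ι + m - 1 = m + (Fintype.card ι - 1))

end Compositions

theorem card_tuples_words_degree_weight_general (n a : ℕ) (ha1 : 1 ≤ a)
    (ha2 : a ≤ n - 1) :
    {w : Fin n → List ℕ+ |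
        (∑ j, (w j).length) = a ∧ (∑ j, ((w j).map (fun x => (x : ℕ))).sum) = n - 1}.Finite ∧
      Nat.card {w : Fin n → List ℕ+ |
          (∑ j, (w j).length) = a ∧ (∑ j, ((w j).map (fun x => (x : ℕ))).sum) = n - 1} =
        Nat.choose (n + a - 1) a * Nat.choose (n - 2) (a - 1) := by
  -- the coercion of `w j : List ℕ+` to `List ℕ` elaborates through the list monad
  simp only [bind_pure_comp, List.map_eq_map, List.map_id']
  let e := (wordTuplesEquiv n a PNat.val (n - 1)).trans
    ((Equiv.refl {c : Fin n → ℕ // ∑ j, c j = a}).prodCongr (wordsOfLengthEquiv a PNat.val (n - 1)))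
  refine ⟨Set.finite_coe_iff.mp (Finite.of_equiv _ e.symm), (Nat.card_congr e).trans ?_⟩
  have ha : 0 < Fintype.card (Fin a) := (Fintype.card_fin a).symm ▸ ha1
  have han : Fintype.card (Fin a) ≤ n - 1 := (Fintype.card_fin a).symm ▸ ha2
  rw [Nat.card_prod, card_tuples_sum_eq, card_pnat_tuples_sum_eq (Fin a) ha han,
    Fintype.card_fin, Fintype.card_fin, Nat.sub_sub]

/-- `dim D^a_∞(n)`: the number of `n`-tuples `(w₁, …, w_n)` of words over the positive
integers with `a` letters in total, the sum of all letters being `n-1`, is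
`C(n+a-1, a) · C(n-2, a-1)`. -/
theorem card_tuples_words_degree_weight (n a : ℕ) (hn : 2 ≤ n) (ha1 : 1 ≤ a)
    (ha2 : a ≤ n - 1) :
    {w : Fin n → List ℕ+ |
        (∑ j, (w j).length) = a ∧ (∑ j, ((w j).map (fun x => (x : ℕ))).sum) = n - 1}.Finite ∧
      Nat.card {w : Fin n → List ℕ+ |
          (∑ j, (w j).length) = a ∧ (∑ j, ((w j).map (fun x => (x : ℕ))).sum) = n - 1} =
        Nat.choose (n + a - 1) a * Nat.choose (n - 2) (a - 1) :=
  card_tuples_words_degree_weight_general n a ha1 ha2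
end

section
/- Define planar rooted trees inductively: a planar rooted tree is either a leaf, or an internal node carrying an ordered list of at least two planar rooted subtrees; the number of leaves and the number of internal nodes of a tree are defined recursively in the obvious way. For n ≥ 2 and 1 ≤ a ≤ n-1, the set of planar rooted trees with exactly n leaves and exactly a internal nodes is finite, and its cardinality t(n, a) satisfies n · t(n, a) = C(n+a-1, a) · C(n-2, a-1). -/
/-- A planar rooted tree: either a leaf, or an internal node carrying an ordered list of
at least two planar rooted subtrees (encoded as the first two children together with the
list of the remaining children). -/
inductive PlanarTree : Type where
  | leaf : PlanarTree
  | node : PlanarTree → PlanarTree → List PlanarTree → PlanarTree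

/-- The number of leaves of a planar rooted tree. -/
def PlanarTree.leaves : PlanarTree → ℕ
  | .leaf => 1
  | .node t₁ t₂ rest => t₁.leaves + t₂.leaves + (rest.attach.map fun x => x.1.leaves).sum
decreasing_by
  · simp_wf; omega
  · simp_wf; omega
  · simp_wf; have := List.sizeOf_lt_of_mem x.2; omega

/-- The number of internal nodes of a planar rooted tree. -/
def PlanarTree.inodes : PlanarTree → ℕ
  | .leaf => 0
  | .node t₁ t₂ rest => 1 + t₁.inodes + t₂.inodes + (rest.attach.map fun x => x.1.inodes).sum
decreasing_by
  · simp_wf; omega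
  · simp_wf; omega
  · simp_wf; have := List.sizeOf_lt_of_mem x.2; omega

/-- The number of internal nodes of a planar rooted tree having exactly `k` children. -/
def PlanarTree.arityCount (k : ℕ) : PlanarTree → ℕ
  | .leaf => 0
  | .node t₁ t₂ rest =>
      (if rest.length + 2 = k then 1 else 0) + t₁.arityCount k + t₂.arityCount k +
        (rest.attach.map fun x => x.1.arityCount k).sum
decreasing_by
  · simp_wf; omega
  · simp_wf; omega
  · simp_wf; have := List.sizeOf_lt_of_mem x.2; omega

/-!
Encode a tree by its preorder word of arities (`0` for a leaf, `k` for a node with `k`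
children). A tree with `n` leaves and `a` internal nodes gives a word of length `n + a` with `a`
nonzero letters, none equal to `1`, and letter sum `n + a - 1`; the words arising this way are
exactly those whose nonempty suffixes all have sum smaller than length, i.e. those on which the
stack decoder never runs out of trees. By the cycle lemma exactly one of the `n + a` rotations of
a word with sum one less than its length has this property, so `(n + a) · t(n, a)` is the number
of all words with these letter statistics: `C(n + a, a)` positions for the nonzero letters times
`C(n - 2, a - 1)` compositions of `n + a - 1` into `a` parts `≥ 2`. It remains to use
`n · C(n + a, a) = (n + a) · C(n + a - 1, a)`.
-/

open Finset

namespace Lukasiewicz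

/-- Every nonempty suffix has sum smaller than its length: reading the word from the right,
`PlanarTree.decode` never runs short of trees. -/
def Decodable : List ℕ → Prop
  | [] => True
  | x :: w => x + w.sum ≤ w.length ∧ Decodable w

instance decidablePredDecodable : DecidablePred Decodable
  | [] => inferInstanceAs (Decidable True)
  | _ :: w =>
    haveI := decidablePredDecodable w
    inferInstanceAs (Decidable (_ ∧ _))

@[simp] theorem decodable_nil : Decodable [] := trivial

@[simp] theorem decodable_cons {x : ℕ} {w : List ℕ} :
    Decodable (x :: w) ↔ x + w.sum ≤ w.length ∧ Decodable w := Iff.rfl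

theorem Decodable.sum_le_length : ∀ {w : List ℕ}, Decodable w → w.sum ≤ w.length
  | [], _ => le_rfl
  | x :: w, h => by simp only [List.sum_cons, List.length_cons]; have := h.1; omega

theorem Decodable.append {u v : List ℕ} (hu : Decodable u) (hv : Decodable v) :
    Decodable (u ++ v) := by
  induction u with
  | nil => exact hv
  | cons x u ih =>
    have := hv.sum_le_length
    simp only [List.cons_append, decodable_cons, List.sum_append, List.length_append] at hu ⊢
    exact ⟨by omega, ih hu.2⟩

/-- Height after `i` steps of the Łukasiewicz walk, in which the letter `x` is a step `x - 1`. -/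
def excess (w : List ℕ) (i : ℕ) : ℤ := (w.take i).sum - i

@[simp] theorem excess_zero (w : List ℕ) : excess w 0 = 0 := by simp [excess]

theorem excess_length (w : List ℕ) : excess w w.length = w.sum - w.length := by
  simp [excess]

theorem excess_cons_succ (x : ℕ) (w : List ℕ) (i : ℕ) :
    excess (x :: w) (i + 1) = x - 1 + excess w i := by
  simp [excess]; ring

theorem excess_append_of_le {u : List ℕ} (v : List ℕ) {i : ℕ} (hi : i ≤ u.length) :
    excess (u ++ v) i = excess u i := by
  simp [excess, List.take_append_of_le_length hi]

theorem excess_append_length_add (u v : List ℕ) (k : ℕ) :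
    excess (u ++ v) (u.length + k) = excess u u.length + excess v k := by
  simp only [excess, List.take_append, List.take_of_length_le (Nat.le_add_right _ _),
    Nat.add_sub_cancel_left, List.take_length, List.sum_append]
  push_cast; ring

theorem excess_take {w : List ℕ} {j k : ℕ} (hk : k ≤ j) : excess (w.take j) k = excess w k := by
  simp [excess, List.take_take, min_eq_left hk]

theorem excess_drop {w : List ℕ} {j : ℕ} (hj : j ≤ w.length) (i : ℕ) :
    excess (w.drop j) i = excess w (j + i) - excess w j := by
  have h := excess_append_length_add (w.take j) (w.drop j) i
  rw [List.take_append_drop, List.length_take_of_le hj, excess_take le_rfl] at h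
  rw [h]; ring

theorem excess_rotate_of_le {w : List ℕ} {j i : ℕ} (hj : j ≤ w.length) (hi : i ≤ w.length - j) :
    excess (w.rotate j) i = excess w (j + i) - excess w j := by
  rw [List.rotate_eq_drop_append_take hj, excess_append_of_le _ (by simpa using hi),
    excess_drop hj]

theorem excess_rotate_sub_add {w : List ℕ} {j k : ℕ} (hj : j ≤ w.length) (hk : k ≤ j) :
    excess (w.rotate j) (w.length - j + k) = excess w w.length - excess w j + excess w k := by
  rw [List.rotate_eq_drop_append_take hj, ← List.length_drop, excess_append_length_add,
    excess_drop hj, excess_take hk, List.length_drop, Nat.add_sub_cancel' hj]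

theorem decodable_iff_excess_length_lt (w : List ℕ) :
    Decodable w ↔ ∀ i < w.length, excess w w.length < excess w i := by
  induction w with
  | nil => simp
  | cons x w ih =>
    rw [decodable_cons, ih, List.length_cons, Nat.forall_lt_succ_left]
    simp only [excess_zero, excess_cons_succ, excess_length, add_lt_add_iff_left]
    exact and_congr (by omega) Iff.rfl

theorem existsUnique_first_argmin {α : Type*} [LinearOrder α] (f : ℕ → α) (m : ℕ) :
    ∃! j, j ≤ m ∧ (∀ k ≤ m, f j ≤ f k) ∧ ∀ k < j, f j < f k := by
  have hmin : ∃ j, j ≤ m ∧ ∀ k ≤ m, f j ≤ f k := by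
    obtain ⟨j, hj, hmin⟩ := (Finset.range (m + 1)).exists_min_image f ⟨0, by simp⟩
    exact ⟨j, Finset.mem_range_succ_iff.1 hj, fun k hk => hmin k (Finset.mem_range_succ_iff.2 hk)⟩
  obtain ⟨hjm, hjmin⟩ := Nat.find_spec hmin
  refine ⟨Nat.find hmin, ⟨hjm, hjmin, fun k hk => ?_⟩, fun j ⟨hj, hmin', hfirst⟩ => ?_⟩
  · obtain ⟨k', hk', hlt⟩ : ∃ k' ≤ m, f k' < f k := by
      have := Nat.find_min hmin hk
      push Not at this
      exact this (hk.le.trans hjm)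
    exact (hjmin k' hk').trans_lt hlt
  · refine le_antisymm (not_lt.1 fun h => ?_) (Nat.find_min' hmin ⟨hj, hmin'⟩)
    exact (hfirst _ h).not_ge (hjmin j hj)

theorem decodable_rotate_iff {w : List ℕ} (hw : w.sum + 1 = w.length) {j : ℕ} (hj0 : 0 < j)
    (hj : j ≤ w.length) :
    Decodable (w.rotate j) ↔
      (∀ k ≤ w.length, excess w j ≤ excess w k) ∧ ∀ k < j, excess w j < excess w k := by
  set m := w.length
  have hE : excess w m = -1 := by rw [excess_length]; omega
  have hEr : excess (w.rotate j) m = -1 := by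
    have := excess_rotate_sub_add hj le_rfl
    rwa [Nat.sub_add_cancel hj, hE, sub_add_cancel] at this
  rw [decodable_iff_excess_length_lt, List.length_rotate, hEr]
  constructor
  · intro h
    have hfirst : ∀ k < j, excess w j < excess w k := fun k hk => by
      have := h (m - j + k) (by omega)
      rw [excess_rotate_sub_add hj hk.le, hE] at this
      linarith
    refine ⟨fun k hk => ?_, hfirst⟩
    rcases lt_or_ge k j with hkj | hjk
    · exact (hfirst k hkj).le
    rcases hk.lt_or_eq with hkm | rfl
    · have := h (k - j) (by omega)
      rw [excess_rotate_of_le hj (by omega), Nat.add_sub_cancel' hjk] at this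
      linarith
    · have := hfirst 0 hj0
      rw [excess_zero] at this
      omega
  · rintro ⟨hmin, hfirst⟩ i hi
    rcases lt_or_ge i (m - j) with hij | hji
    · rw [excess_rotate_of_le hj hij.le]
      linarith [hmin (j + i) (by omega)]
    · obtain ⟨k, rfl⟩ : ∃ k, i = m - j + k := ⟨i - (m - j), by omega⟩
      rw [excess_rotate_sub_add hj (by omega), hE]
      linarith [hfirst k (by omega)]

theorem card_filter_decodable_rotate {w : List ℕ} (hw : w.sum + 1 = w.length) :
    #{j ∈ Icc 1 w.length | Decodable (w.rotate j)} = 1 := by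
  obtain ⟨j, ⟨hjm, hmin, hfirst⟩, huniq⟩ := existsUnique_first_argmin (excess w) w.length
  have hj0 : 0 < j := by
    refine Nat.pos_of_ne_zero fun h => ?_
    have := hmin w.length le_rfl
    rw [h, excess_zero, excess_length] at this
    omega
  refine Finset.card_eq_one.2 ⟨j, Finset.ext fun k => ?_⟩
  simp only [Finset.mem_filter, Finset.mem_Icc, Finset.mem_singleton]
  constructor
  · rintro ⟨⟨hk0, hkm⟩, hk⟩
    exact huniq k ⟨hkm, (decodable_rotate_iff hw hk0 hkm).1 hk⟩
  · rintro rfl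
    exact ⟨⟨hj0, hjm⟩, (decodable_rotate_iff hw hj0 hjm).2 ⟨hmin, hfirst⟩⟩

theorem card_filter_rotate {W : Finset (List ℕ)} {m j : ℕ} (hlen : ∀ w ∈ W, w.length = m)
    (hrot : ∀ w ∈ W, ∀ i, w.rotate i ∈ W) (hj : j ≤ m) (P : List ℕ → Prop) [DecidablePred P] :
    #{w ∈ W | P (w.rotate j)} = #{w ∈ W | P w} := by
  have hinv : ∀ w ∈ W, ∀ i ≤ m, (w.rotate i).rotate (m - i) = w := fun w hw i hi => by
    rw [List.rotate_rotate, Nat.add_sub_cancel' hi, ← hlen w hw, List.rotate_length]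
  have hinv' : ∀ w ∈ W, (w.rotate (m - j)).rotate j = w := fun w hw => by
    simpa [Nat.sub_sub_self hj] using hinv w hw (m - j) (Nat.sub_le m j)
  refine Finset.card_nbij' (·.rotate j) (·.rotate (m - j)) ?_ ?_ ?_ ?_
  · intro w hw
    simp only [Finset.mem_coe, Finset.mem_filter] at hw ⊢
    exact ⟨hrot w hw.1 j, hw.2⟩
  · intro w hw
    simp only [Finset.mem_coe, Finset.mem_filter] at hw ⊢
    exact ⟨hrot w hw.1 _, by rw [hinv' w hw.1]; exact hw.2⟩
  · intro w hw
    exact hinv w (Finset.mem_filter.1 hw).1 j hj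
  · intro w hw
    exact hinv' w (Finset.mem_filter.1 hw).1

theorem length_mul_card_filter_decodable {W : Finset (List ℕ)} {m : ℕ}
    (hW : ∀ w ∈ W, w.length = m ∧ w.sum + 1 = m) (hrot : ∀ w ∈ W, ∀ i, w.rotate i ∈ W) :
    m * #{w ∈ W | Decodable w} = #W := by
  have hlen : ∀ w ∈ W, w.length = m := fun w hw => (hW w hw).1
  calc m * #{w ∈ W | Decodable w}
      = ∑ j ∈ Icc 1 m, #{w ∈ W | Decodable (w.rotate j)} := by
        rw [Finset.sum_congr rfl fun j hj =>
          card_filter_rotate hlen hrot (Finset.mem_Icc.1 hj).2 Decodable]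
        simp
    _ = ∑ w ∈ W, #{j ∈ Icc 1 m | Decodable (w.rotate j)} :=
        (Finset.sum_card_bipartiteAbove_eq_sum_card_bipartiteBelow _).symm
    _ = #W := by
        rw [Finset.card_eq_sum_ones]
        refine Finset.sum_congr rfl fun w hw => ?_
        rw [← hlen w hw]
        exact card_filter_decodable_rotate ((hW w hw).2.trans (hlen w hw).symm)

def arityWords : ℕ → ℕ → ℕ → Finset (List ℕ)
  | 0, 0, 0 => {[]}
  | 0, _, _ => ∅
  | m + 1, 0, e => (arityWords m 0 e).image (List.cons 0)
  | m + 1, a + 1, e => (arityWords m (a + 1) e).image (List.cons 0) ∪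
      (antidiagonal e).biUnion fun p => (arityWords m a p.1).image (List.cons (p.2 + 2))

theorem two_mul_countP_ne_zero_le_sum {w : List ℕ} (hw : 1 ∉ w) :
    2 * w.countP (· ≠ 0) ≤ w.sum := by
  induction w with
  | nil => simp
  | cons x w ih =>
    simp only [List.mem_cons, not_or] at hw
    have := ih hw.2
    rw [List.countP_cons, List.sum_cons]
    rcases Nat.eq_zero_or_pos x with rfl | hx
    · simpa using this
    · rw [if_pos (by simpa using hx.ne')]
      omega

theorem mem_arityWords {m a e : ℕ} {w : List ℕ} :
    w ∈ arityWords m a e ↔ w.length = m ∧ 1 ∉ w ∧ w.countP (· ≠ 0) = a ∧ w.sum = 2 * a + e := by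
  induction m generalizing a e w with
  | zero =>
    rcases w with _ | ⟨x, w⟩ <;> rcases a with _ | a <;> rcases e with _ | e <;> simp [arityWords]
  | succ m ih =>
    rcases w with _ | ⟨_ | _ | d, w⟩
    · rcases a with _ | a <;> simp [arityWords]
    all_goals rcases a with _ | a
    all_goals simp [arityWords, ih]
    -- left: a first letter `d + 2` with `a + 1` nonzero letters, where the excess of the rest
    -- is `w.sum - 2 * a`
    have hsum := @two_mul_countP_ne_zero_le_sum w
    simp only [ne_eq, decide_not] at hsum
    constructor
    · rintro ⟨e', rfl, hlen, h1, hc, hs⟩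
      exact ⟨hlen, h1, hc, by omega⟩
    · rintro ⟨hlen, h1, hc, hs⟩
      have := hsum h1
      exact ⟨w.sum - 2 * a, by omega, hlen, h1, hc, by omega⟩

theorem rotate_mem_arityWords {m a e : ℕ} {w : List ℕ} (hw : w ∈ arityWords m a e) (i : ℕ) :
    w.rotate i ∈ arityWords m a e := by
  have hp := List.rotate_perm w i
  obtain ⟨hlen, h1, hc, hs⟩ := mem_arityWords.1 hw
  exact mem_arityWords.2 ⟨by rw [List.length_rotate, hlen], fun h => h1 (hp.mem_iff.1 h),
    by rw [hp.countP_eq, hc], by rw [hp.sum_eq, hs]⟩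

theorem arityWords_eq_empty_of_lt {m a : ℕ} (h : m < a) (e : ℕ) : arityWords m a e = ∅ :=
  Finset.eq_empty_of_forall_notMem fun w hw => by
    obtain ⟨hlen, -, hc, -⟩ := mem_arityWords.1 hw
    have := w.countP_le_length (p := (· ≠ 0))
    omega

theorem card_arityWords_succ_succ (m a e : ℕ) :
    #(arityWords (m + 1) (a + 1) e) =
      #(arityWords m (a + 1) e) + ∑ i ∈ range (e + 1), #(arityWords m a i) := by
  have hcons : ∀ x : ℕ, Function.Injective (List.cons x) := fun _ => List.cons_injective
  rw [arityWords, card_union_of_disjoint, card_image_of_injective _ (hcons 0), card_biUnion,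
    Nat.sum_antidiagonal_eq_sum_range_succ_mk]
  · simp only [card_image_of_injective _ (hcons _)]
  · intro p hp q hq hpq
    simp only [Function.onFun, Finset.disjoint_left, Finset.mem_image]
    rintro _ ⟨v, -, rfl⟩ ⟨v', -, h⟩
    rw [Finset.mem_coe, Finset.HasAntidiagonal.mem_antidiagonal] at hp hq
    rw [List.cons.injEq] at h
    exact hpq (Prod.ext (by omega) (by omega))
  · simp only [Finset.disjoint_left, Finset.mem_image, Finset.mem_biUnion]
    rintro _ ⟨v, -, rfl⟩ ⟨p, -, v', -, h⟩
    simp at h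

theorem card_arityWords_succ_self (a e : ℕ) :
    #(arityWords (a + 1) (a + 1) e) = ∑ i ∈ range (e + 1), #(arityWords a a i) := by
  rw [card_arityWords_succ_succ, arityWords_eq_empty_of_lt (Nat.lt_succ_self a), card_empty,
    zero_add]

theorem card_arityWords_eq_choose_mul (m a e : ℕ) :
    #(arityWords m a e) = m.choose a * #(arityWords a a e) := by
  induction m generalizing a e with
  | zero => cases a <;> simp [arityWords]
  | succ m ih =>
    cases a with
    | zero => simp [arityWords, card_image_of_injective _ List.cons_injective, ih]
    | succ a =>
      rw [card_arityWords_succ_succ, ih (a + 1), card_arityWords_succ_self]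
      simp only [ih a, ← Finset.mul_sum, Nat.choose_succ_succ' m a]
      ring

theorem card_arityWords_self (a e : ℕ) : #(arityWords (a + 1) (a + 1) e) = (e + a).choose a := by
  induction a generalizing e with
  | zero =>
    rw [card_arityWords_succ_self, Finset.sum_eq_single 0]
    · simp [arityWords]
    · intro i _ hi
      simp [arityWords, hi]
    · simp
  | succ a ih =>
    rw [card_arityWords_succ_self]
    simp only [ih, Nat.sum_range_add_choose]
    ring_nf

end Lukasiewicz

namespace PlanarTree

open Lukasiewicz

@[elab_as_elim]
theorem induction_children {motive : PlanarTree → Prop} (t : PlanarTree) (leaf : motive leaf)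
    (node : ∀ t₁ t₂ rest, (∀ s ∈ t₁ :: t₂ :: rest, motive s) → motive (node t₁ t₂ rest)) :
    motive t :=
  PlanarTree.rec (motive_2 := fun ts => ∀ s ∈ ts, motive s) leaf
    (fun t₁ t₂ rest h₁ h₂ h => node t₁ t₂ rest (List.forall_mem_cons.2 ⟨h₁,
      List.forall_mem_cons.2 ⟨h₂, h⟩⟩))
    (fun _ h => absurd h List.not_mem_nil) (fun _ _ h hs => List.forall_mem_cons.2 ⟨h, hs⟩) t

theorem leaves_node (t₁ t₂ : PlanarTree) (rest : List PlanarTree) :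
    (node t₁ t₂ rest).leaves = ((t₁ :: t₂ :: rest).map leaves).sum := by
  rw [leaves, List.attach_map_val]
  simp only [List.map_cons, List.sum_cons, add_assoc]

theorem inodes_node (t₁ t₂ : PlanarTree) (rest : List PlanarTree) :
    (node t₁ t₂ rest).inodes = ((t₁ :: t₂ :: rest).map inodes).sum + 1 := by
  rw [inodes, List.attach_map_val]
  simp only [List.map_cons, List.sum_cons]
  ring

def code : PlanarTree → List ℕ
  | leaf => [0]
  | node t₁ t₂ rest => (rest.length + 2) :: (t₁.code ++ t₂.code ++ rest.flatMap code)

theorem code_node (t₁ t₂ : PlanarTree) (rest : List PlanarTree) :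
    (node t₁ t₂ rest).code = (rest.length + 2) :: (t₁ :: t₂ :: rest).flatMap code := by
  simp [code]

theorem one_notMem_code (t : PlanarTree) : 1 ∉ t.code := by
  induction t using induction_children with
  | leaf => simp [code]
  | node t₁ t₂ rest ih =>
    rw [code_node, List.mem_cons, List.mem_flatMap, not_or, not_exists]
    exact ⟨by omega, fun s ⟨hs, h⟩ => ih s hs h⟩

theorem length_code (t : PlanarTree) : t.code.length = t.leaves + t.inodes := by
  induction t using induction_children with
  | leaf => simp [code, leaves, inodes]
  | node t₁ t₂ rest ih =>
    rw [code_node, leaves_node, inodes_node, List.length_cons, List.length_flatMap,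
      List.map_congr_left ih, List.sum_map_add]
    ring

theorem countP_ne_zero_code (t : PlanarTree) : t.code.countP (· ≠ 0) = t.inodes := by
  induction t using induction_children with
  | leaf => simp [code, inodes]
  | node t₁ t₂ rest ih =>
    rw [code_node, inodes_node, List.countP_cons, List.countP_flatMap, if_pos (by simp)]
    exact congrArg (· + 1) (congrArg List.sum (List.map_congr_left ih))

theorem decodable_code_and_sum_add_one (t : PlanarTree) :
    Decodable t.code ∧ t.code.sum + 1 = t.code.length := by
  induction t using induction_children with
  | leaf => simp [code]
  | node t₁ t₂ rest ih =>
    have forest : ∀ ts ⊆ t₁ :: t₂ :: rest,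
        Decodable (ts.flatMap code) ∧
          (ts.flatMap code).sum + ts.length = (ts.flatMap code).length := by
      intro ts hts
      induction ts with
      | nil => simp
      | cons s ts ihts =>
        obtain ⟨hd, hs⟩ := ih s (hts List.mem_cons_self)
        obtain ⟨hd', hs'⟩ := ihts (List.subset_of_cons_subset hts)
        simp only [List.flatMap_cons, List.sum_append, List.length_append, List.length_cons]
        exact ⟨hd.append hd', by omega⟩
    obtain ⟨hd, hs⟩ := forest _ (List.Subset.refl _)
    simp only [List.length_cons] at hs
    simp only [code_node, decodable_cons, List.sum_cons, List.length_cons]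
    exact ⟨⟨by omega, hd⟩, by omega⟩

/-- Junk on the letter `1` and on stack underflow; neither occurs on decodable words without `1`. -/
def decodeStep : ℕ → List PlanarTree → List PlanarTree
  | 0, s => leaf :: s
  | k + 2, t₁ :: t₂ :: s => node t₁ t₂ (s.take k) :: s.drop k
  | _, s => s

def decode (w : List ℕ) : List PlanarTree := w.foldr decodeStep []

theorem decode_cons (x : ℕ) (w : List ℕ) : decode (x :: w) = decodeStep x (decode w) := rfl

theorem decode_code_append (t : PlanarTree) (w : List ℕ) :
    decode (t.code ++ w) = t :: decode w := by
  induction t using induction_children generalizing w with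
  | leaf => rw [code, List.singleton_append, decode_cons]; rfl
  | node t₁ t₂ rest ih =>
    have forest : ∀ ts ⊆ t₁ :: t₂ :: rest, decode (ts.flatMap code ++ w) = ts ++ decode w := by
      intro ts hts
      induction ts with
      | nil => rfl
      | cons s ts ihts =>
        rw [List.flatMap_cons, List.append_assoc, ih s (hts List.mem_cons_self),
          ihts (List.subset_of_cons_subset hts), List.cons_append]
    rw [code_node, List.cons_append, decode_cons, forest _ (List.Subset.refl _)]
    simp [decodeStep]

theorem decode_code (t : PlanarTree) : decode t.code = [t] := by
  rw [← List.append_nil t.code, decode_code_append]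
  rfl

theorem code_injective : Function.Injective code := fun t t' h => by
  simpa [decode_code] using congrArg decode h

theorem flatMap_code_decode {w : List ℕ} (h1 : 1 ∉ w) (hw : Decodable w) :
    (decode w).flatMap code = w ∧ (decode w).length + w.sum = w.length := by
  induction w with
  | nil => simp [decode]
  | cons x w ih =>
    rw [List.mem_cons, not_or] at h1
    obtain ⟨hx, hw⟩ := hw
    obtain ⟨hcode, hlen⟩ := ih h1.2 hw
    rw [decode_cons]
    match x, decode w, hcode, hlen with
    | 0, ts, hcode, hlen => simp [decodeStep, code, hcode]; omega
    | 1, _, _, _ => exact absurd rfl h1.1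
    | k + 2, t₁ :: t₂ :: ts, hcode, hlen =>
      simp only [List.length_cons] at hlen hx
      have hts : ts.flatMap code = (ts.take k).flatMap code ++ (ts.drop k).flatMap code := by
        rw [← List.flatMap_append, List.take_append_drop]
      simp only [decodeStep, List.flatMap_cons, code_node,
        List.length_take_of_le (by omega : k ≤ ts.length)]
      refine ⟨by simp [← hcode, hts], by simp; omega⟩
    | k + 2, [], _, hlen => simp at hlen; omega
    | k + 2, [_], _, hlen => simp at hlen; omega

theorem exists_code_eq {w : List ℕ} (h1 : 1 ∉ w) (hw : Decodable w) (hs : w.sum + 1 = w.length) :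
    ∃ t : PlanarTree, t.code = w := by
  obtain ⟨hcode, hlen⟩ := flatMap_code_decode h1 hw
  obtain ⟨t, ht⟩ : ∃ t, decode w = [t] := List.length_eq_one_iff.1 (by omega)
  exact ⟨t, by simpa [ht] using hcode⟩

theorem code_mem_arityWords_iff {t : PlanarTree} {m a e : ℕ} :
    t.code ∈ arityWords m a e ↔ t.leaves + t.inodes = m ∧ t.inodes = a ∧ t.leaves = a + e + 1 := by
  have hs := (decodable_code_and_sum_add_one t).2
  rw [length_code] at hs
  rw [mem_arityWords, length_code, countP_ne_zero_code]
  simp only [one_notMem_code, not_false_eq_true, true_and]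
  constructor <;> omega

theorem filter_decodable_arityWords_subset_range_code {m a e : ℕ} (h : 2 * a + e + 1 = m) :
    (↑{w ∈ arityWords m a e | Decodable w} : Set (List ℕ)) ⊆ Set.range code := fun w hw => by
  obtain ⟨hw, hd⟩ := Finset.mem_filter.1 hw
  obtain ⟨hlen, h1, -, hs⟩ := mem_arityWords.1 hw
  exact exists_code_eq h1 hd (by omega)

end PlanarTree

open Lukasiewicz PlanarTree

theorem schroder_refined_identity_general (n a : ℕ) (ha1 : 1 ≤ a) (ha2 : a ≤ n - 1) :
    {t : PlanarTree | t.leaves = n ∧ t.inodes = a}.Finite ∧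
      n * Nat.card {t : PlanarTree | t.leaves = n ∧ t.inodes = a} =
        Nat.choose (n + a - 1) a * Nat.choose (n - 2) (a - 1) := by
  obtain ⟨b, rfl⟩ : ∃ b, a = b + 1 := ⟨a - 1, by omega⟩
  have hm : 2 * (b + 1) + (n - b - 2) + 1 = n + b + 1 := by omega
  set D := {w ∈ arityWords (n + b + 1) (b + 1) (n - b - 2) | Decodable w}
  have hT : {t : PlanarTree | t.leaves = n ∧ t.inodes = b + 1} = code ⁻¹' D := by
    ext t
    simp [D, code_mem_arityWords_iff, (decodable_code_and_sum_add_one t).1]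
    omega
  have hD : (n + b + 1) * #D = (n + b + 1).choose (b + 1) * (n - 2).choose b := by
    rw [length_mul_card_filter_decodable (fun w hw => ?_) (fun w hw => rotate_mem_arityWords hw),
      card_arityWords_eq_choose_mul, card_arityWords_self, show n - b - 2 + b = n - 2 by omega]
    obtain ⟨hl, -, -, hs⟩ := mem_arityWords.1 hw
    omega
  have hchoose : n * (n + b + 1).choose (b + 1) = (n + b).choose (b + 1) * (n + b + 1) := by
    rw [Nat.choose_mul_succ_eq, show n + b + 1 - (b + 1) = n by omega, mul_comm]
  rw [hT, Nat.card_preimage_of_injective code_injective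
      (filter_decodable_arityWords_subset_range_code hm), Nat.card_coe_set_eq,
    Set.ncard_coe_finset, show n + (b + 1) - 1 = n + b by omega, Nat.add_sub_cancel]
  refine ⟨D.finite_toSet.preimage code_injective.injOn,
    Nat.eq_of_mul_eq_mul_left (show 0 < n + b + 1 by omega) ?_⟩
  calc (n + b + 1) * (n * #D) = n * (n + b + 1).choose (b + 1) * (n - 2).choose b := by
        rw [mul_assoc n, ← hD]; ring
    _ = (n + b + 1) * ((n + b).choose (b + 1) * (n - 2).choose b) := by rw [hchoose]; ring

/-- **Refined Schröder counting.** For `n ≥ 2` and `1 ≤ a ≤ n-1`, the set of planar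
rooted trees with exactly `n` leaves and exactly `a` internal nodes is finite, and its
cardinality `t(n,a)` satisfies `n · t(n,a) = C(n+a-1, a) · C(n-2, a-1)`. -/
theorem schroder_refined_identity (n a : ℕ) (hn : 2 ≤ n) (ha1 : 1 ≤ a) (ha2 : a ≤ n - 1) :
    {t : PlanarTree | t.leaves = n ∧ t.inodes = a}.Finite ∧
      n * Nat.card {t : PlanarTree | t.leaves = n ∧ t.inodes = a} =
        Nat.choose (n + a - 1) a * Nat.choose (n - 2) (a - 1) :=
  schroder_refined_identity_general n a ha1 ha2
end
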